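/- arXiv:1209.5712 — 14 statements merged into one kernel-verified Lean document; each statement's English description precedes it below -/
import Mathlib

section
/- If a finite point configuration A in R^d admits a weak Cayley decomposition of length m, then the degree of A is at most d+1-m. -/
/-! A set `S` of fewer than `m` points cannot meet all `m` nonempty parts `A₁, …, Aₘ`, so it
misses some `Aᵢ` and hence lies in the proper face `A \ Aᵢ`. -/

theorem Finset.exists_ne_forall_mem_apply_ne {ι β : Type*} [Fintype β] (f : ι → β)
    (S : Finset ι) (b₀ : β) (h : S.card + 1 < Fintype.card β) :
    ∃ b ≠ b₀, ∀ j ∈ S, f j ≠ b := by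
  classical
  have hcard : (insert b₀ (S.image f)).card < (Finset.univ : Finset β).card :=
    calc (insert b₀ (S.image f)).card ≤ (S.image f).card + 1 := Finset.card_insert_le _ _
      _ ≤ S.card + 1 := Nat.add_le_add_right Finset.card_image_le 1
      _ < _ := h
  obtain ⟨b, -, hb⟩ := Finset.exists_mem_notMem_of_card_lt_card hcard
  rw [Finset.mem_insert, not_or] at hb
  exact ⟨b, hb.1, fun j hj hjb => hb.2 (Finset.mem_image.mpr ⟨j, hj, hjb⟩)⟩

theorem stmt_0_general (d n m : ℕ)
    (A : Fin n → (Fin d → ℝ))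
    (P : Fin n → Fin (m + 1))
    (hfaces : ∀ i : Fin (m + 1), i ≠ 0 →
      ∃ (w : Fin d → ℝ) (c : ℝ), w ≠ 0 ∧ (∀ j, ∑ k, w k * A j k ≤ c) ∧
        (∀ j, (∑ k, w k * A j k = c ↔ P j ≠ i))) :
    ∀ S : Finset (Fin n), S.card < m →
      ∃ (w : Fin d → ℝ) (c : ℝ), w ≠ 0 ∧ (∀ j, ∑ k, w k * A j k ≤ c) ∧
        ∀ j ∈ S, ∑ k, w k * A j k = c := by
  intro S hS
  obtain ⟨i, hi0, hmiss⟩ := S.exists_ne_forall_mem_apply_ne P 0 (by simpa using hS)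
  obtain ⟨w, c, hw, hle, hface⟩ := hfaces i hi0
  exact ⟨w, c, hw, hle, fun j hj => (hface j).mpr (hmiss j hj)⟩

/-- If a finite point configuration `A` in `ℝ^d` admits a weak Cayley decomposition of
length `m`, then `deg(A) ≤ d+1-m`, i.e. every subset of `A` of size `< m` lies in a
common facet (equivalently, in a common supporting hyperplane) of `conv(A)`. -/
theorem stmt_0 (d n m : ℕ) (hm : 1 ≤ m)
    (A : Fin n → (Fin d → ℝ))
    (hspan : affineSpan ℝ (Set.range A) = ⊤)
    (P : Fin n → Fin (m + 1))
    (hnonempty : ∀ i : Fin (m + 1), i ≠ 0 → ∃ j, P j = i)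
    (hfaces : ∀ i : Fin (m + 1), i ≠ 0 →
      ∃ (w : Fin d → ℝ) (c : ℝ), w ≠ 0 ∧ (∀ j, ∑ k, w k * A j k ≤ c) ∧
        (∀ j, (∑ k, w k * A j k = c ↔ P j ≠ i))) :
    ∀ S : Finset (Fin n), S.card < m →
      ∃ (w : Fin d → ℝ) (c : ℝ), w ≠ 0 ∧ (∀ j, ∑ k, w k * A j k ≤ c) ∧
        ∀ j ∈ S, ∑ k, w k * A j k = c :=
  stmt_0_general d n m A P hfaces
end

section
/- A full-dimensional finite point configuration A in R^d has degree 0 if and only if A is the vertex set of a d-simplex, possibly with repeated points. -/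
/-!
If the points of `A` are the vertices of a simplex, every proper subset of them misses a vertex
and so lies on the facet opposite to it, cut out by that vertex's barycentric coordinate.

Conversely, take an affine basis `b` of `ℝ^d` among the points of `A`. A further point
`p = ∑ λᵢ bᵢ` of `A` yields an affine dependence among `d + 2` points with two coefficients of
the same sign: those of `p` and of some `bᵢ` with `λᵢ < 0`, or, if all `λᵢ ≥ 0`, those of two
`bᵢ` with `λᵢ > 0` (as `p` is not a vertex). The at most `d` other points lie on a supporting
hyperplane, and evaluating the dependence on it forces all `d + 2` points onto that hyperplane,
which is impossible since the `bᵢ` span.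
-/

open Set

variable {V : Type*} [AddCommGroup V] [Module ℝ V]

def LiesOnSupportingHyperplane (P s : Set V) : Prop :=
  ∃ (f : V →ₗ[ℝ] ℝ) (c : ℝ), f ≠ 0 ∧ (∀ x ∈ P, f x ≤ c) ∧ ∀ x ∈ s, f x = c

/-- For a full-dimensional configuration `A` this says that the codegree of `A` is at least `k`,
subfamilies being counted with multiplicity. -/
def HasCodegreeAtLeast {ι : Type*} (A : ι → V) (k : ℕ) : Prop :=
  ∀ S : Finset ι, S.Nonempty → S.card < k → LiesOnSupportingHyperplane (range A) (A '' S)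

theorem LinearMap.eq_zero_of_forall_apply_eq_of_affineSpan_eq_top {s : Set V}
    (hs : affineSpan ℝ s = ⊤) {f : V →ₗ[ℝ] ℝ} {c : ℝ} (h : ∀ x ∈ s, f x = c) : f = 0 := by
  simpa using congrArg AffineMap.linear
    (AffineMap.ext_on hs (f := f.toAffineMap) (g := AffineMap.const ℝ V c) h)

theorem LinearMap.apply_eq_of_sum_smul_eq_zero {κ : Type*} [Fintype κ] {x : κ → V}
    {μ : κ → ℝ} (hμ : ∑ o, μ o = 0) (hμx : ∑ o, μ o • x o = 0) {f : V →ₗ[ℝ] ℝ} {c : ℝ}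
    (hle : ∀ o, f (x o) ≤ c) (heq : ∀ o, 0 ≤ μ o → f (x o) = c) (o : κ) : f (x o) = c := by
  have hsum : ∑ o, μ o * (f (x o) - c) = 0 := by
    simp only [mul_sub, Finset.sum_sub_distrib, ← Finset.sum_mul, hμ, zero_mul, sub_zero]
    simpa [map_sum] using congrArg f hμx
  have hnonneg : ∀ o ∈ Finset.univ, 0 ≤ μ o * (f (x o) - c) := by
    intro o _
    rcases le_or_gt 0 (μ o) with h | h
    · simp [heq o h]
    · exact mul_nonneg_of_nonpos_of_nonpos h.le (sub_nonpos.2 (hle o))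
  rcases le_or_gt 0 (μ o) with h | h
  · exact heq o h
  · have := (Finset.sum_eq_zero_iff_of_nonneg hnonneg).1 hsum o (Finset.mem_univ o)
    linarith [(mul_eq_zero.1 this).resolve_left h.ne]

theorem not_hasCodegreeAtLeast_of_sum_smul_eq_zero {ι κ : Type*} [Fintype κ] {A : ι → V}
    {x : κ → V} (hxA : range x ⊆ range A) (hx : affineSpan ℝ (range x) = ⊤) {ν : κ → ℝ}
    (hν : ∑ o, ν o = 0) (hνx : ∑ o, ν o • x o = 0) {o₁ o₂ : κ} (ho : o₁ ≠ o₂)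
    (h₁ : ν o₁ < 0) (h₂ : ν o₂ < 0) : ¬ HasCodegreeAtLeast A (Fintype.card κ - 1) := by
  classical
  intro hA
  choose j hj using fun o => hxA (mem_range_self o)
  set T := Finset.univ.filter fun o => 0 ≤ ν o
  have hT : T ⊆ Finset.univ \ {o₁, o₂} := by
    intro o
    simp only [T, Finset.mem_filter, Finset.mem_sdiff, Finset.mem_insert,
      Finset.mem_singleton]
    rintro ⟨-, h⟩
    exact ⟨Finset.mem_univ o, by rintro (rfl | rfl) <;> linarith⟩
  have hTne : T.Nonempty := by
    by_contra! hT₀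
    have hneg : ∀ o ∈ Finset.univ, ν o < 0 := fun o _ => by
      by_contra! h
      exact Finset.notMem_empty o (hT₀ ▸ Finset.mem_filter.2 ⟨Finset.mem_univ o, h⟩)
    linarith [Finset.sum_neg hneg ⟨o₁, Finset.mem_univ o₁⟩]
  have hcard : (T.image j).card < Fintype.card κ - 1 := by
    have hκ : 1 < Fintype.card κ := Fintype.one_lt_card_iff.2 ⟨o₁, o₂, ho⟩
    calc (T.image j).card ≤ T.card := Finset.card_image_le
      _ ≤ (Finset.univ \ {o₁, o₂}).card := Finset.card_le_card hT
      _ = Fintype.card κ - 2 := by rw [Finset.card_univ_sdiff, Finset.card_pair ho]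
      _ < Fintype.card κ - 1 := by omega
  obtain ⟨f, c, hf, hle, heq⟩ := hA (T.image j) (hTne.image j) hcard
  refine hf (LinearMap.eq_zero_of_forall_apply_eq_of_affineSpan_eq_top hx (c := c) ?_)
  rintro _ ⟨o, rfl⟩
  refine LinearMap.apply_eq_of_sum_smul_eq_zero hν hνx (fun o => ?_) (fun o ho => ?_) o
  · exact hj o ▸ hle _ (mem_range_self _)
  · exact hj o ▸ heq _ ⟨j o, Finset.mem_image_of_mem j (by simp [T, ho]), rfl⟩

namespace AffineBasis

variable {ι : Type*} (b : AffineBasis ι ℝ V)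

theorem liesOnSupportingHyperplane_of_notMem {s : Set V} (hs : s ⊆ range b) (hne : s.Nonempty)
    {i₀ : ι} (hi₀ : b i₀ ∉ s) : LiesOnSupportingHyperplane (range b) s := by
  classical
  set g := b.coord i₀
  have hg : ∀ x, (-g.linear) x = g 0 - g x := fun x => by
    simp [congrFun (AffineMap.decomp' g) x]
  obtain ⟨_, hi₁⟩ := hne
  obtain ⟨i₁, rfl⟩ := hs hi₁
  refine ⟨-g.linear, g 0, fun h => ?_, ?_, ?_⟩
  · obtain ⟨q, hq⟩ := (AffineMap.linear_eq_zero_iff_exists_const g).1 (neg_eq_zero.1 h)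
    have hne : i₀ ≠ i₁ := by rintro rfl; exact hi₀ hi₁
    have h₀ := b.coord_apply_eq i₀
    have h₁ := b.coord_apply_ne hne
    simp only [g, hq, AffineMap.const_apply] at h₀ h₁
    exact one_ne_zero (h₀.symm.trans h₁)
  · rintro _ ⟨i, rfl⟩
    rw [hg, sub_le_self_iff, b.coord_apply]
    split_ifs <;> norm_num
  · intro x hx
    obtain ⟨i, rfl⟩ := hs hx
    have hne : i₀ ≠ i := by rintro rfl; exact hi₀ hx
    rw [hg, b.coord_apply_ne hne, sub_zero]

theorem hasCodegreeAtLeast_card [Fintype ι] {κ : Type*} {A : κ → V} (hA : range A = range b) :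
    HasCodegreeAtLeast A (Fintype.card ι) := by
  classical
  intro S hS hcard
  rw [hA]
  have hsub : A '' S ⊆ range b := hA ▸ image_subset_range A S
  obtain ⟨i₀, hi₀⟩ : ∃ i₀, b i₀ ∉ A '' S := by
    by_contra! h
    have hle := Finset.card_le_card_of_injOn b (s := Finset.univ) (t := S.image A)
      (fun i _ => by simpa using h i) b.ind.injective.injOn
    rw [Finset.card_univ] at hle
    have := Finset.card_image_le (s := S) (f := A)
    omega
  exact b.liesOnSupportingHyperplane_of_notMem hsub (hS.to_set.image A) hi₀

theorem exists_coord_pos_pos_of_notMem [Fintype ι] {p : V} (hp : p ∉ range b)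
    (hnonneg : ∀ i, 0 ≤ b.coord i p) :
    ∃ i i', i ≠ i' ∧ 0 < b.coord i p ∧ 0 < b.coord i' p := by
  classical
  obtain ⟨i, hi⟩ : ∃ i, 0 < b.coord i p := by
    by_contra! h
    linarith [b.sum_coord_apply_eq_one p, Finset.sum_nonpos fun i (_ : i ∈ Finset.univ) => h i]
  by_contra! h
  have hzero : ∀ j, j ≠ i → b.coord j p = 0 := fun j hj =>
    le_antisymm (h i j hj.symm hi) (hnonneg j)
  have hone : b.coord i p = 1 := by
    rw [← b.sum_coord_apply_eq_one p,
      Finset.sum_eq_single i (fun j _ hj => hzero j hj) (by simp)]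
  refine hp ⟨i, b.ext_elem fun j => ?_⟩
  rcases eq_or_ne j i with rfl | hj
  · rw [hone, b.coord_apply_eq]
  · rw [hzero j hj, b.coord_apply_ne hj]

theorem range_eq_of_hasCodegreeAtLeast [Fintype ι] {κ : Type*} {A : κ → V}
    (hbA : range b ⊆ range A) (hA : HasCodegreeAtLeast A (Fintype.card ι)) :
    range A = range b := by
  refine subset_antisymm ?_ hbA
  rintro p ⟨j, rfl⟩
  by_contra hp
  set x : Option ι → V := fun o => o.elim (A j) b
  have hxA : range x ⊆ range A := by
    rintro _ ⟨_ | i, rfl⟩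
    exacts [mem_range_self j, hbA (mem_range_self i)]
  have hx : affineSpan ℝ (range x) = ⊤ :=
    top_unique (b.tot ▸ affineSpan_mono ℝ (by rintro _ ⟨i, rfl⟩; exact ⟨some i, rfl⟩))
  set μ : Option ι → ℝ := fun o => o.elim (-1) (b.coord · (A j))
  have hμ : ∑ o, μ o = 0 := by simp [μ, Fintype.sum_option, b.sum_coord_apply_eq_one]
  have hμx : ∑ o, μ o • x o = 0 := by
    simp [μ, x, Fintype.sum_option, b.linear_combination_coord_eq_self]
  replace hA : HasCodegreeAtLeast A (Fintype.card (Option ι) - 1) := by simpa using hA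
  by_cases hneg : ∃ i, b.coord i (A j) < 0
  · obtain ⟨i, hi⟩ := hneg
    exact not_hasCodegreeAtLeast_of_sum_smul_eq_zero hxA hx hμ hμx (Option.some_ne_none i).symm
      (by simp [μ]) hi hA
  · push Not at hneg
    obtain ⟨i, i', hii', hi, hi'⟩ := b.exists_coord_pos_pos_of_notMem hp hneg
    exact not_hasCodegreeAtLeast_of_sum_smul_eq_zero hxA hx (ν := -μ)
      (by simp [Finset.sum_neg_distrib, hμ]) (by simp [neg_smul, Finset.sum_neg_distrib, hμx])
      (Option.some_injective _ |>.ne hii') (by simpa [μ] using hi) (by simpa [μ] using hi') hA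

end AffineBasis

theorem liesOnSupportingHyperplane_iff_exists_dotProduct {n : Type*} [Fintype n] [DecidableEq n]
    {P s : Set (n → ℝ)} :
    LiesOnSupportingHyperplane P s ↔
      ∃ (w : n → ℝ) (c : ℝ), w ≠ 0 ∧ (∀ x ∈ P, w ⬝ᵥ x ≤ c) ∧ ∀ x ∈ s, w ⬝ᵥ x = c := by
  rw [LiesOnSupportingHyperplane, (dotProductEquiv ℝ n).symm.toEquiv.exists_congr_left]
  simp

theorem forall_exists_dotProduct_iff_hasCodegreeAtLeast {ι : Type*} {d : ℕ}
    (A : ι → Fin d → ℝ) (m : ℕ) :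
    (∀ S : Finset ι, S.Nonempty → S.card ≤ m →
      ∃ (w : Fin d → ℝ) (c : ℝ), w ≠ 0 ∧ (∀ j, ∑ k, w k * A j k ≤ c) ∧
        ∀ j ∈ S, ∑ k, w k * A j k = c) ↔ HasCodegreeAtLeast A (m + 1) := by
  simp only [HasCodegreeAtLeast, Nat.lt_add_one_iff,
    liesOnSupportingHyperplane_iff_exists_dotProduct, forall_mem_range, forall_mem_image,
    Finset.mem_coe]
  rfl

/-- A full-dimensional point configuration `A` in `ℝ^d` has degree `0` (i.e. every nonempty
subset of size `≤ d` lies in a common supporting hyperplane of `conv(A)`) if and only if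
`A` is the vertex set of a `d`-simplex, possibly with repeated points. -/
theorem stmt_1 (d n : ℕ) (A : Fin n → (Fin d → ℝ))
    (hspan : affineSpan ℝ (Set.range A) = ⊤) :
    (∀ S : Finset (Fin n), S.Nonempty → S.card ≤ d →
      ∃ (w : Fin d → ℝ) (c : ℝ), w ≠ 0 ∧ (∀ j, ∑ k, w k * A j k ≤ c) ∧
        ∀ j ∈ S, ∑ k, w k * A j k = c)
    ↔ ∃ B : Fin (d + 1) → (Fin d → ℝ),
        AffineIndependent ℝ B ∧ Set.range A = Set.range B := by
  rw [forall_exists_dotProduct_iff_hasCodegreeAtLeast]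
  constructor
  · intro hA
    obtain ⟨s, hsA, b, hb⟩ := AffineBasis.exists_affine_subbasis hspan
    have : Fintype s := ((finite_range A).subset hsA).fintype
    have hcard : Fintype.card s = d + 1 := by simpa using b.card_eq_finrank_add_one
    have hAb : range A = range b :=
      b.range_eq_of_hasCodegreeAtLeast (by rw [hb, Subtype.range_coe]; exact hsA) (hcard ▸ hA)
    let e := Fintype.equivFinOfCardEq hcard
    exact ⟨b ∘ e.symm, b.ind.comp_embedding e.symm.toEmbedding,
      by rw [hAb, e.symm.surjective.range_comp]⟩
  · rintro ⟨B, hB, hAB⟩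
    let b : AffineBasis (Fin (d + 1)) ℝ (Fin d → ℝ) := ⟨B, hB, hAB ▸ hspan⟩
    simpa using b.hasCodegreeAtLeast_card (A := A) hAB
end

section
/- Any d-dimensional configuration A of n points with d ≥ deg(A) + (n-1)/2 is a pyramid, i.e., there is a point a in A not lying in the affine hull of A \ {a}. -/
/-! If no point of `A` is an apex, every point has a nonzero coefficient in some affine dependence
of `A`, and a generic linear combination of these dependences has full support. Replacing it by its
negative if necessary, its positive part `P` has at most `n / 2` points, so `#P + δ ≤ d` and `P` lies
on a hyperplane `{f = c}` supporting `A`, i.e. with `f ≤ c` on `A`. For the dependence `λ`, the sum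
`∑ λⱼ (f aⱼ - c)` vanishes and all its terms are nonnegative, so every `aⱼ` lies on the hyperplane,
contradicting that `A` spans `ℝᵈ`. -/

open Finset

variable {k V ι : Type*}

section Field

variable [Field k] [AddCommGroup V] [Module k V]

variable (k) in
def affineDependences [Fintype ι] (p : ι → V) : Submodule k (ι → k) :=
  LinearMap.ker ((Fintype.linearCombination k fun _ => (1 : k)).prod
    (Fintype.linearCombination k p))

theorem mem_affineDependences [Fintype ι] {p : ι → V} {w : ι → k} :
    w ∈ affineDependences k p ↔ ∑ i, w i = 0 ∧ ∑ i, w i • p i = 0 := by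
  simp [affineDependences, Fintype.linearCombination_apply]

theorem Submodule.exists_forall_apply_ne_zero [Infinite k] [Finite ι]
    (L : Submodule k (ι → k)) (h : ∀ i, ∃ v ∈ L, v i ≠ 0) : ∃ v ∈ L, ∀ i, v i ≠ 0 := by
  have := Fintype.ofFinite ι
  let coord (i : ι) : Submodule k L := LinearMap.ker ((LinearMap.proj i).comp L.subtype)
  have hcoord (i : ι) : coord i ≠ ⊤ := by
    obtain ⟨v, hvL, hv⟩ := h i
    intro htop
    have : (⟨v, hvL⟩ : L) ∈ coord i := htop ▸ Submodule.mem_top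
    exact hv (by simpa [coord] using this)
  obtain ⟨⟨v, hvL⟩, hv⟩ := Set.ne_univ_iff_exists_notMem _ |>.mp <| Set.ssubset_univ_iff.mp <|
    Submodule.iUnion_ssubset_of_forall_ne_top_of_card_lt univ coord hcoord (by simp)
  exact ⟨v, hvL, by simpa [coord] using hv⟩

theorem exists_mem_affineDependences_apply_ne_zero [Fintype ι] {p : ι → V} {i : ι}
    (h : p i ∈ affineSpan k (p '' {j | j ≠ i})) : ∃ w ∈ affineDependences k p, w i ≠ 0 := by
  classical
  obtain ⟨s, w, hs, hw, hpi⟩ := eq_affineCombination_of_mem_affineSpan_image h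
  rw [s.affineCombination_eq_linear_combination p w hw] at hpi
  have hi : i ∉ s := fun his => hs his rfl
  refine ⟨(s : Set ι).indicator w - Pi.single i 1, mem_affineDependences.mpr ⟨?_, ?_⟩, ?_⟩
  · simp [sum_sub_distrib, sum_indicator_subset _ (subset_univ s), hw]
  · simp only [Pi.sub_apply, sub_smul, sum_sub_distrib, ← Set.indicator_smul_apply_left,
      sum_indicator_subset _ (subset_univ s)]
    simp [← hpi]
  · simp [hi]

theorem affineSpan_range_ne_top_of_apply_eq {p : ι → V} (f : V →ₗ[k] k) (hf : f ≠ 0) (c : k)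
    (h : ∀ j, f (p j) = c) : affineSpan k (Set.range p) ≠ ⊤ := by
  intro htop
  have hspan : vectorSpan k (Set.range p) ≤ LinearMap.ker f := by
    rw [vectorSpan_def, Submodule.span_le]
    rintro _ ⟨_, ⟨i, rfl⟩, _, ⟨j, rfl⟩, rfl⟩
    simp [h]
  rw [← direction_affineSpan, htop, AffineSubspace.direction_top, top_le_iff,
    LinearMap.ker_eq_top] at hspan
  exact hf hspan

theorem sum_mul_sub_eq_zero_of_mem_affineDependences [Fintype ι] {p : ι → V} {w : ι → k}
    (hw : w ∈ affineDependences k p) (f : V →ₗ[k] k) (c : k) :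
    ∑ j, w j * (f (p j) - c) = 0 := by
  obtain ⟨hsum, hcomb⟩ := mem_affineDependences.mp hw
  calc ∑ j, w j * (f (p j) - c) = f (∑ j, w j • p j) - (∑ j, w j) * c := by
        simp [mul_sub, sum_sub_distrib, sum_mul]
    _ = 0 := by simp [hsum, hcomb]

end Field

section LinearOrderedField

variable [Field k] [LinearOrder k] [IsStrictOrderedRing k] [Fintype ι]

theorem apply_eq_of_mem_affineDependences [AddCommGroup V] [Module k V] {p : ι → V}
    {w : ι → k} (hw : w ∈ affineDependences k p) {f : V →ₗ[k] k} {c : k}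
    (hle : ∀ j, f (p j) ≤ c) (hpos : ∀ j, 0 < w j → f (p j) = c) {j : ι} (hj : w j ≠ 0) :
    f (p j) = c := by
  have hnonneg : ∀ i ∈ univ, 0 ≤ w i * (f (p i) - c) := by
    intro i _
    rcases lt_or_ge 0 (w i) with hi | hi
    · simp [hpos i hi]
    · exact mul_nonneg_of_nonpos_of_nonpos hi (sub_nonpos.mpr (hle i))
  have := (sum_eq_zero_iff_of_nonneg hnonneg).mp
    (sum_mul_sub_eq_zero_of_mem_affineDependences hw f c) j (mem_univ j)
  exact sub_eq_zero.mp ((mul_eq_zero.mp this).resolve_left hj)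

theorem Submodule.exists_forall_apply_ne_zero_two_mul_card_pos_le (L : Submodule k (ι → k))
    {v : ι → k} (hvL : v ∈ L) (hv : ∀ i, v i ≠ 0) :
    ∃ u ∈ L, (∀ i, u i ≠ 0) ∧ 2 * #{i | 0 < u i} ≤ Fintype.card ι := by
  have hcard : #{i | 0 < v i} + #{i | 0 < (-v) i} = Fintype.card ι := by
    have hneg : univ.filter (fun i => 0 < (-v) i) = univ.filter (fun i => ¬0 < v i) :=
      filter_congr fun i _ => by simp [(hv i).le_iff_lt]
    rw [hneg, card_filter_add_card_filter_not, card_univ]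
  by_cases h : 2 * #{i | 0 < v i} ≤ Fintype.card ι
  · exact ⟨v, hvL, hv, h⟩
  · exact ⟨-v, L.neg_mem hvL, by simpa using hv, by omega⟩

end LinearOrderedField

/-- Any `d`-dimensional configuration `A` of `n` points with `d ≥ deg(A) + (n-1)/2`
is a pyramid: some point of `A` lies outside the affine hull of the remaining points.
Here `deg(A) ≤ δ` is expressed by: every nonempty subset of size `≤ d - δ` lies in a
common supporting hyperplane of `conv(A)`. -/
theorem stmt_2 (d n δ : ℕ) (A : Fin n → (Fin d → ℝ))
    (hspan : affineSpan ℝ (Set.range A) = ⊤)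
    (hdeg : ∀ S : Finset (Fin n), S.Nonempty → S.card + δ ≤ d →
      ∃ (w : Fin d → ℝ) (c : ℝ), w ≠ 0 ∧ (∀ j, ∑ k, w k * A j k ≤ c) ∧
        ∀ j ∈ S, ∑ k, w k * A j k = c)
    (hd : 2 * δ + n ≤ 2 * d + 1) :
    ∃ i : Fin n, A i ∉ affineSpan ℝ (A '' {j | j ≠ i}) := by
  by_contra! hcone
  have : Nonempty (Fin n) := by
    rw [← Set.range_nonempty_iff_nonempty, ← affineSpan_nonempty (k := ℝ) (s := Set.range A), hspan,
      AffineSubspace.top_coe]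
    exact Set.univ_nonempty
  obtain ⟨v, hvL, hv⟩ := (affineDependences ℝ A).exists_forall_apply_ne_zero
    fun i => exists_mem_affineDependences_apply_ne_zero (hcone i)
  obtain ⟨u, huL, hu, hcard⟩ :=
    (affineDependences ℝ A).exists_forall_apply_ne_zero_two_mul_card_pos_le hvL hv
  have hpos : (univ.filter (0 < u ·)).Nonempty := by
    obtain ⟨j, -, hj⟩ := exists_pos_of_sum_zero_of_exists_nonzero u
      (mem_affineDependences.mp huL).1 ⟨Classical.arbitrary _, mem_univ _, hu _⟩
    exact ⟨j, by simpa using hj⟩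
  obtain ⟨w, c, hw, hle, heq⟩ := hdeg _ hpos (by rw [Fintype.card_fin] at hcard; omega)
  refine affineSpan_range_ne_top_of_apply_eq (dotProductBilin ℝ ℝ w) ?_ c
    (fun j => apply_eq_of_mem_affineDependences huL hle
      (fun i hi => heq i (by simpa using hi)) (hu j)) hspan
  exact fun h => hw (dotProduct_self_eq_zero.mp (LinearMap.congr_fun h w))
end

section
/- Let V be a vector configuration of rank r (linearly spanning R^r) with r+d+1 elements and dual degree δ. Then V admits a weak dual Cayley decomposition of length at least d - 3δ + 1, i.e., it contains at least d-3δ+1 pairwise disjoint subsets each of which contains the origin in the relative interior of its convex hull. -/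
/-!
For a finite configuration `S` whose open halfspaces each contain at most `M` vectors, we show by
induction on `#S` that there are pairwise disjoint positively dependent subsets `P` of `S` with
`#S + 2 ρ ≤ #P + 3 M`, where `ρ` is the rank. Choose a basis `Bs ⊆ S` and coordinate functionals
`B i`. If some coordinate `B i` has at least two vectors on one side, pass to the hyperplane
`B i = 0`: tilting a functional by a large multiple of `± B i` shows that the halfspace bound there
drops by `m = max (#{B i > 0}) (#{B i < 0}) ≥ 2`, the rank drops by at most one, and at most
`3 m - 2` vectors are lost. Otherwise the positive side of each `B i` contains only the basis vector
`i` and the negative side at most one vector, so the fundamental circuits of the vectors outside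
`Bs` are positive and pairwise disjoint; they number `#S - ρ`, while `∑ i, B i` gives `ρ ≤ M`.
With `#S = r + d + 1`, `ρ = r` and `M = r + δ` this yields `d - 3 δ + 1` sets.
-/

open Finset Submodule

variable {ι E : Type*} [AddCommGroup E]

theorem LinearIndepOn.exists_coord {K : Type*} [Field K] [Module K E] [DecidableEq ι]
    {V : ι → E} {R : Finset ι} (hR : LinearIndepOn K V (R : Set ι)) :
    ∃ B : ι → Module.Dual K E, (∀ i ∈ R, ∀ j ∈ R, B i (V j) = if i = j then 1 else 0) ∧
      ∀ x ∈ span K (V '' R), ∑ i ∈ R, B i x • V i = x := by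
  choose g hg using fun i : (R : Set ι) =>
    LinearMap.exists_extend (Finsupp.lapply i ∘ₗ hR.repr)
  have hg_apply : ∀ i x (hx : x ∈ span K (Set.range fun i : (R : Set ι) => V i)),
      g i x = hR.repr ⟨x, hx⟩ i := fun i x hx => LinearMap.congr_fun (hg i) ⟨x, hx⟩
  refine ⟨fun i => if hi : i ∈ R then g ⟨i, hi⟩ else 0, fun i hi j hj => ?_, fun x hx => ?_⟩
  · have hVj : V j ∈ span K (Set.range fun i : (R : Set ι) => V i) :=
      subset_span ⟨⟨j, hj⟩, rfl⟩
    simp only [dif_pos hi, hg_apply _ _ hVj, hR.repr_eq_single ⟨j, hj⟩ ⟨_, hVj⟩ rfl,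
      Finsupp.single_apply, Subtype.mk.injEq, eq_comm]
  · rw [Set.image_eq_range] at hx
    have h := hR.linearCombination_repr ⟨x, hx⟩
    rw [Finsupp.linearCombination_apply, Finsupp.sum_fintype _ _ (by simp)] at h
    refine Eq.trans ?_ h
    rw [← R.sum_coe_sort]
    refine Finset.sum_congr rfl fun i _ => ?_
    simp [hg_apply _ _ hx]

variable [Module ℝ E]

/-- The subfamilies the paper calls *positive vectors*. -/
def IsPositivelyDependent (V : ι → E) (s : Finset ι) : Prop :=
  s.Nonempty ∧ ∃ l : ι → ℝ, (∀ j ∈ s, 0 < l j) ∧ ∑ j ∈ s, l j • V j = 0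

theorem card_filter_ker_add_card_filter_pos_le (V : ι → E) (S : Finset ι) {M : ℕ}
    (hM : ∀ g : Module.Dual ℝ E, #{i ∈ S | 0 < g (V i)} ≤ M) (β φ : Module.Dual ℝ E) :
    #{i ∈ {i ∈ S | β (V i) = 0} | 0 < φ (V i)} + #{i ∈ S | 0 < β (V i)} ≤ M := by
  obtain ⟨t, ht⟩ : ∃ t : ℝ, ∀ i ∈ S, 0 < β (V i) → 0 < φ (V i) + t * β (V i) := by
    refine ((Filter.eventually_all_finset (l := Filter.atTop) S).2 fun i _ => ?_).exists
    filter_upwards [Filter.eventually_gt_atTop (-φ (V i) / β (V i))] with t ht hβ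
    rw [div_lt_iff₀ hβ] at ht
    linarith
  classical
  rw [filter_filter, ← card_union_of_disjoint (disjoint_filter.2 fun i _ h => h.1.not_gt)]
  refine (card_le_card fun i hi => ?_).trans (hM (φ + t • β))
  simp only [mem_union, mem_filter, LinearMap.add_apply, LinearMap.smul_apply,
    smul_eq_mul] at hi ⊢
  rcases hi with ⟨hiS, hβ, hφ⟩ | ⟨hiS, hβ⟩
  · exact ⟨hiS, by simpa [hβ] using hφ⟩
  · exact ⟨hiS, ht i hiS hβ⟩

theorem card_filter_ker_add_max_le (V : ι → E) (S : Finset ι) {M : ℕ}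
    (hM : ∀ g : Module.Dual ℝ E, #{i ∈ S | 0 < g (V i)} ≤ M) (β φ : Module.Dual ℝ E) :
    #{i ∈ {i ∈ S | β (V i) = 0} | 0 < φ (V i)} +
      max #{i ∈ S | 0 < β (V i)} #{i ∈ S | β (V i) < 0} ≤ M := by
  have hpos := card_filter_ker_add_card_filter_pos_le V S hM β φ
  have hneg := card_filter_ker_add_card_filter_pos_le V S hM (-β) φ
  simp only [LinearMap.neg_apply, neg_eq_zero, neg_pos] at hneg
  omega

theorem exists_disjoint_positive_fundamentalCircuits [DecidableEq ι] (V : ι → E)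
    {S Bs : Finset ι} (hBsS : Bs ⊆ S) (B : ι → Module.Dual ℝ E)
    (hexp : ∀ q ∈ S \ Bs, ∑ i ∈ Bs, B i (V q) • V i = V q)
    (hnonpos : ∀ i ∈ Bs, ∀ q ∈ S \ Bs, B i (V q) ≤ 0)
    (hneg : ∀ i ∈ Bs, #{q ∈ S \ Bs | B i (V q) < 0} ≤ 1) :
    ∃ P : Finset (Finset ι), (P : Set (Finset ι)).PairwiseDisjoint id ∧
      (∀ p ∈ P, p ⊆ S ∧ IsPositivelyDependent V p) ∧ #P = #(S \ Bs) := by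
  -- the fundamental circuit of `q` with respect to the basis `Bs`
  set W : ι → Finset ι := fun q => insert q {i ∈ Bs | B i (V q) ≠ 0}
  have hq_notMem : ∀ q ∈ S \ Bs, q ∉ {i ∈ Bs | B i (V q) ≠ 0} := fun q hq h =>
    (mem_sdiff.1 hq).2 (mem_filter.1 h).1
  have hW_sub : ∀ q ∈ S \ Bs, W q ⊆ S := fun q hq =>
    insert_subset (mem_sdiff.1 hq).1 ((filter_subset _ _).trans hBsS)
  have hmem_W : ∀ q ∈ S \ Bs, ∀ j ∈ W q, j = q ∨ j ∈ Bs ∧ B j (V q) < 0 := by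
    intro q hq j hj
    rcases mem_insert.1 hj with rfl | hj
    · exact .inl rfl
    · obtain ⟨hjB, hne⟩ := mem_filter.1 hj
      exact .inr ⟨hjB, (hnonpos j hjB q hq).lt_of_ne hne⟩
  have hinj : Set.InjOn W (S \ Bs : Finset ι) := by
    intro q hq q' hq' hWq
    rcases hmem_W q' hq' q (hWq ▸ mem_insert_self q _) with h | ⟨hqB, -⟩
    · exact h
    · exact absurd hqB (mem_sdiff.1 hq).2
  have hdisj : ((S \ Bs : Finset ι) : Set ι).PairwiseDisjoint W := by
    intro q hq q' hq' hne
    rw [Function.onFun, disjoint_left]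
    intro j hj hj'
    rcases hmem_W q hq j hj with rfl | ⟨hjB, hlt⟩ <;>
      rcases hmem_W q' hq' j hj' with rfl | ⟨hjB', hlt'⟩
    · exact hne rfl
    · exact (mem_sdiff.1 hq).2 hjB'
    · exact (mem_sdiff.1 hq').2 hjB
    · exact hne (card_le_one.1 (hneg j hjB) q (mem_filter.2 ⟨hq, hlt⟩) q'
        (mem_filter.2 ⟨hq', hlt'⟩))
  have hpos : ∀ q ∈ S \ Bs, IsPositivelyDependent V (W q) := by
    intro q hq
    refine ⟨insert_nonempty _ _, fun j => if j = q then 1 else -B j (V q), fun j hj => ?_, ?_⟩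
    · rcases hmem_W q hq j hj with rfl | ⟨hjB, hlt⟩
      · simp
      · simp [ne_of_mem_of_not_mem hjB (mem_sdiff.1 hq).2, hlt]
    · have hterm : ∀ j ∈ {i ∈ Bs | B i (V q) ≠ 0},
          (if j = q then 1 else -B j (V q)) • V j = -(B j (V q) • V j) := fun j hj => by
        rw [if_neg (ne_of_mem_of_not_mem hj (hq_notMem q hq)), neg_smul]
      rw [sum_insert (hq_notMem q hq)]
      beta_reduce
      rw [if_pos rfl, one_smul, sum_congr rfl hterm, sum_neg_distrib,
        sum_filter_of_ne (fun j _ h => left_ne_zero_of_smul h), hexp q hq, add_neg_cancel]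
  refine ⟨(S \ Bs).image W, ?_, ?_, card_image_of_injOn hinj⟩
  · rw [coe_image, hinj.pairwiseDisjoint_image]
    exact hdisj
  · simp only [mem_image]
    rintro _ ⟨q, hq, rfl⟩
    exact ⟨hW_sub q hq, hpos q hq⟩

theorem exists_disjoint_positivelyDependent_of_linearIndepOn [DecidableEq ι] (V : ι → E)
    (S : Finset ι) (M : ℕ) (hM : ∀ g : Module.Dual ℝ E, #{i ∈ S | 0 < g (V i)} ≤ M)
    (R : Finset ι) (hRS : R ⊆ S) (hR : LinearIndepOn ℝ V (R : Set ι)) :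
    ∃ P : Finset (Finset ι), (P : Set (Finset ι)).PairwiseDisjoint id ∧
      (∀ p ∈ P, p ⊆ S ∧ IsPositivelyDependent V p) ∧ #S + 2 * #R ≤ #P + 3 * M := by
  induction S using Finset.strongInduction generalizing M R with
  | H S ih =>
  obtain ⟨Bs, hBsS, hRBs, hspan, hBs⟩ := exists_linearIndepOn_extension hR (coe_subset.2 hRS)
  lift Bs to Finset ι using S.finite_toSet.subset hBsS
  rw [coe_subset] at hBsS hRBs
  obtain ⟨B, hδ, hexp⟩ := LinearIndepOn.exists_coord hBs
  have hexpS : ∀ j ∈ S, ∑ i ∈ Bs, B i (V j) • V i = V j := fun j hj =>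
    hexp _ (hspan ⟨j, hj, rfl⟩)
  have hRBs_card := card_le_card hRBs
  by_cases hsplit : ∃ i ∈ Bs, 2 ≤ max #{j ∈ S | 0 < B i (V j)} #{j ∈ S | B i (V j) < 0}
  · obtain ⟨i, hi, hmax⟩ := hsplit
    have hTS : {j ∈ S | B i (V j) = 0} ⊂ S :=
      filter_ssubset.2 ⟨i, hBsS hi, by simp [hδ i hi i hi]⟩
    have hT := card_filter_ker_add_max_le V S hM (B i)
    have hRT : Bs.erase i ⊆ {j ∈ S | B i (V j) = 0} := fun j hj =>
      mem_filter.2 ⟨hBsS (mem_of_mem_erase hj),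
        by simp [hδ i hi j (mem_of_mem_erase hj), (ne_of_mem_erase hj).symm]⟩
    obtain ⟨P, hPdisj, hPS, hcard⟩ := ih _ hTS _ (fun φ => Nat.le_sub_of_add_le (hT φ))
      (Bs.erase i) hRT (hBs.mono (by simp))
    have hS_le : #S ≤ #{j ∈ S | B i (V j) = 0} + #{j ∈ S | 0 < B i (V j)} +
        #{j ∈ S | B i (V j) < 0} := by
      refine (card_le_card fun j hj => ?_).trans
        ((card_union_le _ _).trans (by gcongr; exact card_union_le _ _))
      simp only [mem_union, mem_filter, hj, true_and]
      rcases lt_trichotomy (B i (V j)) 0 with h | h | h <;> simp [h]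
    have hmaxM : max #{j ∈ S | 0 < B i (V j)} #{j ∈ S | B i (V j) < 0} ≤ M := by
      simpa using hT 0
    have := card_erase_of_mem hi
    exact ⟨P, hPdisj, fun p hp => ⟨(hPS p hp).1.trans (filter_subset _ _), (hPS p hp).2⟩,
      by omega⟩
  · push Not at hsplit
    have hnonpos : ∀ i ∈ Bs, ∀ q ∈ S \ Bs, B i (V q) ≤ 0 := by
      intro i hi q hq
      by_contra! h
      have : q = i := (card_le_one (s := {j ∈ S | 0 < B i (V j)})).1
        (by have := hsplit i hi; omega) q (mem_filter.2 ⟨(mem_sdiff.1 hq).1, h⟩) i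
        (mem_filter.2 ⟨hBsS hi, by simp [hδ i hi i hi]⟩)
      exact (mem_sdiff.1 hq).2 (this ▸ hi)
    have hneg : ∀ i ∈ Bs, #{q ∈ S \ Bs | B i (V q) < 0} ≤ 1 := fun i hi =>
      (card_le_card (filter_subset_filter _ sdiff_subset)).trans (by have := hsplit i hi; omega)
    obtain ⟨P, hPdisj, hPS, hPcard⟩ := exists_disjoint_positive_fundamentalCircuits V hBsS B
      (fun q hq => hexpS q (mem_sdiff.1 hq).1) hnonpos hneg
    have hsum : ∀ j ∈ Bs, (∑ i ∈ Bs, B i) (V j) = 1 := fun j hj => by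
      rw [LinearMap.sum_apply, sum_congr rfl fun i hi => hδ i hi j hj, sum_ite_eq', if_pos hj]
    have hBs_le : #Bs ≤ M := (card_le_card fun j hj =>
      mem_filter.2 ⟨hBsS hj, by rw [hsum j hj]; exact one_pos⟩).trans (hM (∑ i ∈ Bs, B i))
    have := card_sdiff_add_card_eq_card hBsS
    exact ⟨P, hPdisj, hPS, by omega⟩

theorem exists_disjoint_positivelyDependent [DecidableEq ι] (V : ι → E) (S : Finset ι) (M : ℕ)
    (hM : ∀ g : Module.Dual ℝ E, #{i ∈ S | 0 < g (V i)} ≤ M) :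
    ∃ P : Finset (Finset ι), (P : Set (Finset ι)).PairwiseDisjoint id ∧
      (∀ p ∈ P, p ⊆ S ∧ IsPositivelyDependent V p) ∧
      #S + 2 * Module.finrank ℝ (span ℝ (V '' S)) ≤ #P + 3 * M := by
  obtain ⟨R, hRS, -, hspan, hR⟩ :=
    exists_linearIndepOn_extension (linearIndepOn_empty ℝ V) (Set.empty_subset (S : Set ι))
  lift R to Finset ι using S.finite_toSet.subset hRS
  have hrank : Module.finrank ℝ (span ℝ (V '' S)) = #R := by
    rw [le_antisymm (span_le.2 hspan) (span_mono (Set.image_mono hRS)), Set.image_eq_range,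
      finrank_span_eq_card hR]
    simp
  rw [hrank]
  exact exists_disjoint_positivelyDependent_of_linearIndepOn V S M hM R (coe_subset.1 hRS) hR

theorem stmt_6_general (r d δ : ℕ) (V : Fin (r + d + 1) → (Fin r → ℝ))
    (hspan : Submodule.span ℝ (Set.range V) = ⊤)
    (hdeg1 : ∀ w : Fin r → ℝ,
      (Finset.univ.filter (fun i => 0 < ∑ k, w k * V i k)).card ≤ r + δ) :
    ∀ kk : ℕ, (kk : ℤ) ≤ (d : ℤ) - 3 * (δ : ℤ) + 1 →
      ∃ F : Fin kk → Finset (Fin (r + d + 1)),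
        (∀ i j, i ≠ j → Disjoint (F i) (F j)) ∧
        ∀ i, (F i).Nonempty ∧ ∃ l : Fin (r + d + 1) → ℝ,
          (∀ j ∈ F i, 0 < l j) ∧ ∑ j ∈ F i, l j • V j = 0 := by
  intro kk hkk
  have hM : ∀ g : Module.Dual ℝ (Fin r → ℝ), #{i ∈ univ | 0 < g (V i)} ≤ r + δ := fun g => by
    convert hdeg1 fun k => g fun j => if k = j then 1 else 0 using 4 with i
    rw [LinearMap.pi_apply_eq_sum_univ g (V i)]
    simp only [smul_eq_mul, mul_comm]
  obtain ⟨P, hPdisj, hPS, hcard⟩ := exists_disjoint_positivelyDependent V univ (r + δ) hM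
  rw [coe_univ, Set.image_univ, hspan, finrank_top, Module.finrank_fin_fun] at hcard
  obtain ⟨Q, hQP, hQ⟩ := exists_subset_card_eq (show kk ≤ #P by simp at hcard; omega)
  set e := (Q.equivFinOfCardEq hQ).symm
  refine ⟨fun i => e i, fun i j hij => hPdisj (hQP (e i).2) (hQP (e j).2)
    fun h => hij (e.injective (Subtype.ext h)), fun i => ?_⟩
  obtain ⟨-, hne, l, hl, hsum⟩ := hPS _ (hQP (e i).2)
  exact ⟨hne, l, hl, hsum⟩

/-- Let `V` be a vector configuration of rank `r` with `r+d+1` elements and dual degree `δ`.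
Then `V` admits a weak dual Cayley decomposition of length at least `d - 3δ + 1`: for every
`kk ≤ d - 3δ + 1` there are `kk` pairwise disjoint nonempty subsets of `V`, each admitting a
strictly positive linear dependence (i.e. containing the origin in the relative interior of
its convex hull). -/
theorem stmt_6 (r d δ : ℕ) (V : Fin (r + d + 1) → (Fin r → ℝ))
    (hspan : Submodule.span ℝ (Set.range V) = ⊤)
    (hdeg1 : ∀ w : Fin r → ℝ,
      (Finset.univ.filter (fun i => 0 < ∑ k, w k * V i k)).card ≤ r + δ)
    (hdeg2 : ∃ w : Fin r → ℝ, w ≠ 0 ∧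
      (Finset.univ.filter (fun i => 0 < ∑ k, w k * V i k)).card = r + δ) :
    ∀ kk : ℕ, (kk : ℤ) ≤ (d : ℤ) - 3 * (δ : ℤ) + 1 →
      ∃ F : Fin kk → Finset (Fin (r + d + 1)),
        (∀ i j, i ≠ j → Disjoint (F i) (F j)) ∧
        ∀ i, (F i).Nonempty ∧ ∃ l : Fin (r + d + 1) → ℝ,
          (∀ j ∈ F i, 0 < l j) ∧ ∑ j ∈ F i, l j • V j = 0 :=
  stmt_6_general r d δ V hspan hdeg1
end

section
/- If a vector configuration V in R^r with n elements admits a weak dual Cayley decomposition of length m, then its dual degree satisfies deg*(V) ≤ n - r - m. -/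
/-!
A strictly positive dependence `∑ λ_v v = 0` on a nonempty part forces every linear functional
to be nonpositive somewhere on that part, so each open halfspace misses at least one vector of
each of the `m` disjoint parts. For the bound `r + m ≤ n`, the dependencies, extended by zero,
have disjoint nonempty supports and hence are `m` linearly independent vectors in the kernel of
the surjection `ℝⁿ → ℝʳ` given by `V`; rank–nullity concludes.
-/

open Finset Function Module

lemma exists_nonpos_of_sum_smul_eq_zero {𝕜 E ι : Type*} [Semiring 𝕜] [LinearOrder 𝕜]
    [IsStrictOrderedRing 𝕜] [AddCommMonoid E] [Module 𝕜 E] (f : E →ₗ[𝕜] 𝕜) {v : ι → E}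
    {s : Finset ι} (hs : s.Nonempty) {l : ι → 𝕜} (hl : ∀ j ∈ s, 0 < l j)
    (hsum : ∑ j ∈ s, l j • v j = 0) :
    ∃ j ∈ s, f (v j) ≤ 0 := by
  by_contra! hpos
  have : 0 < f (∑ j ∈ s, l j • v j) := by
    simp only [map_sum, map_smul, smul_eq_mul]
    exact sum_pos (fun j hj => mul_pos (hl j hj) (hpos j hj)) hs
  simp [hsum] at this

lemma card_filter_add_card_le_of_pairwise_disjoint {ι κ : Type*} [Fintype ι] [Fintype κ]
    (p : ι → Prop) [DecidablePred p] (F : κ → Finset ι) (hdisj : Pairwise (Disjoint on F))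
    (hF : ∀ i, ∃ j ∈ F i, ¬ p j) :
    #(univ.filter p) + Fintype.card κ ≤ Fintype.card ι := by
  choose g hgF hgp using hF
  have hg : Injective g := fun a b hab => by
    by_contra hne
    exact disjoint_left.mp (hdisj hne) (hgF a) (hab ▸ hgF b)
  have hcard : Fintype.card κ ≤ #(univ.filter fun j => ¬ p j) := by
    simpa using card_le_card_of_injOn (s := univ) g (fun i _ => by simpa using hgp i) hg.injOn
  have := card_filter_add_card_filter_not (s := univ) p
  rw [card_univ] at this
  omega

lemma linearIndependent_of_pairwise_disjoint_support {R ι κ : Type*} [Ring R] [NoZeroDivisors R]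
    (L : κ → ι → R) (hdisj : Pairwise (Disjoint on fun i => support (L i)))
    (hne : ∀ i, L i ≠ 0) :
    LinearIndependent R L := by
  rw [linearIndependent_iff']
  intro s c hc i hi
  obtain ⟨j, hj⟩ : ∃ j, L i j ≠ 0 := Function.ne_iff.mp (hne i)
  have hcj := congrFun hc j
  simp only [Finset.sum_apply, Pi.smul_apply, smul_eq_mul, Pi.zero_apply] at hcj
  rw [sum_eq_single i (fun i' _ hi' => ?_) (absurd hi)] at hcj
  · exact (mul_eq_zero.mp hcj).resolve_right hj
  · have : L i' j = 0 := notMem_support.mp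
      (Set.disjoint_left.mp (hdisj hi'.symm) (mem_support.mpr hj))
    simp [this]

lemma finrank_add_card_le_of_pairwise_disjoint_dependencies {K E ι κ : Type*} [Field K]
    [AddCommGroup E] [Module K E] [Fintype ι] [Fintype κ] {v : ι → E}
    (hspan : Submodule.span K (Set.range v) = ⊤) (L : κ → ι → K)
    (hdep : ∀ i, ∑ j, L i j • v j = 0)
    (hdisj : Pairwise (Disjoint on fun i => support (L i))) (hne : ∀ i, L i ≠ 0) :
    finrank K E + Fintype.card κ ≤ Fintype.card ι := by
  set T := Fintype.linearCombination K v
  have hrange : LinearMap.range T = ⊤ := by rw [Fintype.range_linearCombination, hspan]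
  have hker : Fintype.card κ ≤ finrank K (LinearMap.ker T) := by
    have hind : LinearIndependent K fun i => (⟨L i, hdep i⟩ : LinearMap.ker T) :=
      .of_comp (LinearMap.ker T).subtype (linearIndependent_of_pairwise_disjoint_support L hdisj hne)
    exact hind.fintype_card_le_finrank
  have hrank := LinearMap.finrank_range_add_finrank_ker T
  rw [hrange, finrank_top, finrank_fintype_fun_eq_card] at hrank
  omega

/-- If a vector configuration `V` in `ℝ^r` with `n` elements admits a weak dual Cayley
decomposition of length `m` (i.e. `m` pairwise disjoint nonempty subsets each admitting a
strictly positive linear dependence), then its dual degree satisfies `deg*(V) ≤ n - r - m`,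
i.e. every open halfspace bounded by a linear hyperplane contains at most `n - r - m + r`
elements of `V`. -/
theorem stmt_7 (r n m : ℕ) (V : Fin n → (Fin r → ℝ))
    (hspan : Submodule.span ℝ (Set.range V) = ⊤)
    (F : Fin m → Finset (Fin n))
    (hdisj : ∀ i j, i ≠ j → Disjoint (F i) (F j))
    (hpos : ∀ i, (F i).Nonempty ∧ ∃ l : Fin n → ℝ,
      (∀ j ∈ F i, 0 < l j) ∧ ∑ j ∈ F i, l j • V j = 0) :
    ∀ w : Fin r → ℝ,
      (Finset.univ.filter (fun i => 0 < ∑ k, w k * V i k)).card + m ≤ n ∧ r + m ≤ n := by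
  choose hne l hl hsum using hpos
  intro w
  constructor
  · simpa using card_filter_add_card_le_of_pairwise_disjoint _ F hdisj fun i => by
      obtain ⟨j, hj, hle⟩ :=
        exists_nonpos_of_sum_smul_eq_zero (dotProductBilin ℝ ℝ w) (hne i) (hl i) (hsum i)
      exact ⟨j, hj, not_lt.mpr hle⟩
  · set L : Fin m → Fin n → ℝ := fun i j => if j ∈ F i then l i j else 0
    have hsupp : ∀ i, support (L i) ⊆ F i := fun i j hj => by_contra fun h => hj (if_neg h)
    have hdep : ∀ i, ∑ j, L i j • V j = 0 := fun i => by
      simp only [L, ite_smul, zero_smul, Fintype.sum_ite_mem, hsum]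
    have hL : ∀ i, L i ≠ 0 := fun i h => by
      obtain ⟨j, hj⟩ := hne i
      simpa [L, hj, (hl i j hj).ne'] using congrFun h j
    simpa using finrank_add_card_le_of_pairwise_disjoint_dependencies hspan L hdep
      (fun i j hij => (Finset.disjoint_coe.mpr (hdisj i j hij)).mono (hsupp i) (hsupp j)) hL
end

section
/- For a vector configuration V in R^r and any v ∈ V, the dual degrees of the deletion V \ v and of the contraction V/v are both at most the dual degree of V. -/
/-!
An open halfspace is given by its normal `w`, and it contains `V i` iff `0 < w ⬝ᵥ V i`. In both
cases we tilt a halfspace of the minor into one of `V` that contains the same vectors together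
with `v = V i0`, so the minor's count plus one is at most `rank V + δ`.

Deletion: if `v` lies in the span `W` of the other vectors, the rank does not drop and there is
nothing to do. Otherwise the rank drops by one, and adding a multiple of a functional that
vanishes on `W` but not at `v` makes `v` positive without changing the other values.

Contraction: the projection `π` along `v` is self-adjoint, so `w ⬝ᵥ π x = π w ⬝ᵥ x`, and
`π w ⬝ᵥ v = 0`. Adding a small positive multiple of `v` to `π w` keeps the finitely many positive
values positive and makes `v` positive.
-/

open Finset Matrix Filter Topology Module Submodule

theorem exists_pos_forall_pos_add_mul {K ι : Type*} [Field K] [LinearOrder K]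
    [IsStrictOrderedRing K] [TopologicalSpace K] [OrderTopology K]
    {s : Finset ι} {a : ι → K} (b : ι → K) (ha : ∀ i ∈ s, 0 < a i) :
    ∃ t > 0, ∀ i ∈ s, 0 < a i + t * b i := by
  have hev : ∀ i ∈ s, ∀ᶠ t in 𝓝[>] (0 : K), 0 < a i + t * b i := fun i hi =>
    have hcont : Continuous fun t : K => a i + t * b i := by fun_prop
    (hcont.tendsto' 0 (a i) (by simp) |>.eventually (lt_mem_nhds (ha i hi))).filter_mono
      nhdsWithin_le_nhds
  exact (((eventually_all_finset s).2 hev).and self_mem_nhdsWithin).exists.imp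
    fun t ht => ⟨ht.2, ht.1⟩

theorem span_image_ne_sup_span_singleton {K ι M : Type*} [Semiring K] [AddCommMonoid M]
    [Module K M] (V : ι → M) (i0 : ι) :
    span K (V '' {j | j ≠ i0}) ⊔ K ∙ V i0 = span K (Set.range V) := by
  have hrange : Set.range V = insert (V i0) (V '' {j | j ≠ i0}) := by
    ext x
    constructor
    · rintro ⟨j, rfl⟩
      by_cases hj : j = i0
      · exact hj ▸ Set.mem_insert _ _
      · exact Set.mem_insert_of_mem _ ⟨j, hj, rfl⟩
    · rintro (rfl | ⟨j, -, rfl⟩) <;> exact Set.mem_range_self _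
  rw [hrange, span_insert, sup_comm]

theorem card_filter_ne_add_one_le_of_pos {ι : Type*} [Fintype ι] [DecidableEq ι]
    {p q : ι → Prop} [DecidablePred p] [DecidablePred q] {i0 : ι}
    (hq : ∀ i, i ≠ i0 → p i → q i) (hi0 : q i0) :
    #{i | i ≠ i0 ∧ p i} + 1 ≤ #{i | q i} := by
  rw [← card_insert_of_notMem (a := i0) (by simp)]
  refine card_le_card fun i hi => ?_
  simp only [mem_insert, mem_filter, mem_univ, true_and] at hi ⊢
  rcases hi with rfl | ⟨hne, hp⟩
  exacts [hi0, hq i hne hp]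

section DotProduct

variable {K m : Type*} [Field K] [LinearOrder K] [IsStrictOrderedRing K] [Fintype m]

theorem dotProduct_self_pos_of_ne_zero {v : m → K} (hv : v ≠ 0) : 0 < v ⬝ᵥ v :=
  (sum_nonneg fun i _ => mul_self_nonneg (v i)).lt_of_ne' (mt dotProduct_self_eq_zero.1 hv)

-- For `v = 0` this is the identity, since `0 / 0 = 0`.
def contractAlong (v x : m → K) : m → K := x - (v ⬝ᵥ x / v ⬝ᵥ v) • v

omit [LinearOrder K] [IsStrictOrderedRing K] in
theorem dotProduct_contractAlong (v w x : m → K) :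
    w ⬝ᵥ contractAlong v x = contractAlong v w ⬝ᵥ x := by
  simp only [contractAlong, dotProduct_sub, sub_dotProduct, dotProduct_smul, smul_dotProduct,
    smul_eq_mul, dotProduct_comm v]
  ring

theorem contractAlong_dotProduct_self (v w : m → K) : contractAlong v w ⬝ᵥ v = 0 := by
  rcases eq_or_ne v 0 with rfl | hv
  · simp
  · simp [contractAlong, sub_dotProduct, smul_dotProduct, dotProduct_comm v w,
      (dotProduct_self_pos_of_ne_zero hv).ne']

variable {ι : Type*} [Fintype ι] [DecidableEq ι]

theorem exists_card_pos_add_one_le_of_notMem_span {V : ι → m → K} {i0 : ι}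
    (hV : V i0 ∉ span K (V '' {j | j ≠ i0})) (w : m → K) :
    ∃ w' : m → K, #{i | i ≠ i0 ∧ 0 < w ⬝ᵥ V i} + 1 ≤ #{i | 0 < w' ⬝ᵥ V i} := by
  classical
  obtain ⟨f, hf0, hfW⟩ := exists_dual_map_eq_bot_of_notMem hV inferInstance
  have hfV : ∀ i, i ≠ i0 → f (V i) = 0 := fun i hi =>
    LinearMap.le_ker_iff_map.2 hfW (subset_span ⟨i, hi, rfl⟩)
  set u := (dotProductEquiv K m).symm f
  have hu : ∀ x, u ⬝ᵥ x = f x := fun x =>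
    congrArg (· x) ((dotProductEquiv K m).apply_symm_apply f)
  refine ⟨w + ((1 - w ⬝ᵥ V i0) / f (V i0)) • u, card_filter_ne_add_one_le_of_pos ?_ ?_⟩
  · intro i hi hpos
    simpa [add_dotProduct, hu, hfV i hi] using hpos
  · simp [add_dotProduct, hu, hf0]

theorem exists_card_pos_contractAlong_add_one_le [TopologicalSpace K] [OrderTopology K]
    {V : ι → m → K} {i0 : ι} (hV : V i0 ≠ 0) (w : m → K) :
    ∃ w' : m → K,
      #{i | i ≠ i0 ∧ 0 < w ⬝ᵥ contractAlong (V i0) (V i)} + 1 ≤ #{i | 0 < w' ⬝ᵥ V i} := by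
  set u := contractAlong (V i0) w
  obtain ⟨t, ht, hpos⟩ := exists_pos_forall_pos_add_mul (fun i => V i0 ⬝ᵥ V i)
    (s := {i | i ≠ i0 ∧ 0 < u ⬝ᵥ V i}) (fun i hi => (mem_filter.1 hi).2.2)
  refine ⟨u + t • V i0, card_filter_ne_add_one_le_of_pos (fun i hi hpi => ?_) ?_⟩
  · rw [dotProduct_contractAlong] at hpi
    simpa [add_dotProduct] using hpos i (mem_filter.2 ⟨mem_univ _, hi, hpi⟩)
  · simpa [add_dotProduct, u, contractAlong_dotProduct_self] using
      mul_pos ht (dotProduct_self_pos_of_ne_zero hV)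

end DotProduct

/-- For a vector configuration `V` in `ℝ^r` of dual degree at most `δ`, both the deletion
`V \ v` (with degree measured against the rank of its span) and the contraction `V/v`
(orthogonal projection along `v`, of rank `r-1`) have dual degree at most `δ`. -/
theorem stmt_8 (r n δ : ℕ) (V : Fin n → (Fin r → ℝ))
    (hspan : Submodule.span ℝ (Set.range V) = ⊤)
    (hdeg : ∀ w : Fin r → ℝ,
      (Finset.univ.filter (fun i => 0 < ∑ k, w k * V i k)).card ≤ r + δ)
    (i0 : Fin n) :
    (∀ w : Fin r → ℝ,
      (Finset.univ.filter (fun i => i ≠ i0 ∧ 0 < ∑ k, w k * V i k)).card ≤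
        Module.finrank ℝ (Submodule.span ℝ (V '' {j | j ≠ i0})) + δ) ∧
    (V i0 ≠ 0 → ∀ w : Fin r → ℝ,
      (Finset.univ.filter (fun i => i ≠ i0 ∧
        0 < ∑ k, w k * (V i k - ((∑ k', V i0 k' * V i k') / (∑ k', V i0 k' * V i0 k')) * V i0 k))).card
        ≤ (r - 1) + δ) := by
  replace hdeg : ∀ w, #{i | 0 < w ⬝ᵥ V i} ≤ r + δ := hdeg
  have hsup := span_image_ne_sup_span_singleton (K := ℝ) V i0
  rw [hspan] at hsup
  refine ⟨fun w => ?_, fun hV w => ?_⟩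
  · change #{i | i ≠ i0 ∧ 0 < w ⬝ᵥ V i} ≤ _
    by_cases hmem : V i0 ∈ span ℝ (V '' {j | j ≠ i0})
    · rw [sup_eq_left.2 ((span_singleton_le_iff_mem _ _).2 hmem)] at hsup
      rw [hsup, finrank_top, finrank_fin_fun]
      exact (card_le_card (monotone_filter_right _ fun _ _ hi => hi.2)).trans (hdeg w)
    · have hrank := finrank_sup_span_singleton hmem
      rw [hsup, finrank_top, finrank_fin_fun] at hrank
      obtain ⟨w', hw'⟩ := exists_card_pos_add_one_le_of_notMem_span hmem w
      have := hdeg w'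
      omega
  · change #{i | i ≠ i0 ∧ 0 < w ⬝ᵥ contractAlong (V i0) (V i)} ≤ _
    obtain ⟨w', hw'⟩ := exists_card_pos_contractAlong_add_one_le hV w
    have := hdeg w'
    omega
end

section
/- Let V be a vector configuration in R^r and W ⊂ V a subconfiguration with lin(W) ∩ V = W. Write rank(W)=r_W, |W|=r_W+d_W+1, rank(V/W)=r-r_W. Then deg*(V) ≥ deg*(W) + deg*(V/W), where deg*(W) is computed inside lin(W) and deg*(V/W) inside the quotient. -/
/-!
Tilt a witness of `deg*(V/W)` by a small multiple of a witness of `deg*(W)`. The first functional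
vanishes on `W`, so on `W` the tilted functional has the sign of the second one; off `W` it stays
positive wherever the first one was, once the multiple is small enough. The two positive sets are
disjoint, so their sizes add up.
-/

open Finset

theorem exists_pos_forall_pos_add_mul_s9 {ι : Type*} (s : Finset ι) (f g : ι → ℝ)
    (hg : ∀ i ∈ s, 0 < g i) : ∃ ε > 0, ∀ i ∈ s, 0 < g i + ε * f i := by
  have hsmall : ∀ᶠ ε in nhdsWithin (0 : ℝ) (Set.Ioi 0), ∀ i ∈ s, 0 < g i + ε * f i := by
    refine (Filter.eventually_all_finset s).2 fun i hi => ?_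
    have hcont : Filter.Tendsto (fun ε : ℝ => g i + ε * f i) (nhds 0) (nhds (g i)) := by
      simpa using ((Filter.tendsto_id (x := nhds (0 : ℝ))).mul_const (f i)).const_add (g i)
    exact nhdsWithin_le_nhds (hcont.eventually (lt_mem_nhds (hg i hi)))
  obtain ⟨ε, hε, hpos⟩ := (hsmall.and self_mem_nhdsWithin).exists
  exact ⟨ε, hpos, hε⟩

theorem exists_card_filter_pos_add_card_le {ι : Type*} [Fintype ι] [DecidableEq ι]
    (T : Finset ι) (f g : ι → ℝ) (hgT : ∀ i ∈ T, g i = 0) :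
    ∃ ε > 0, #(T.filter (0 < f ·)) + #(univ.filter fun i => i ∉ T ∧ 0 < g i) ≤
      #(univ.filter fun i => 0 < g i + ε * f i) := by
  set S := univ.filter fun i => i ∉ T ∧ 0 < g i
  obtain ⟨ε, hε, hS⟩ := exists_pos_forall_pos_add_mul_s9 S f g fun i hi => (mem_filter.1 hi).2.2
  refine ⟨ε, hε, ?_⟩
  have hdisj : Disjoint (T.filter (0 < f ·)) S :=
    disjoint_left.2 fun i hiT hiS => (mem_filter.1 hiS).2.1 (mem_filter.1 hiT).1
  rw [← card_union_of_disjoint hdisj]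
  refine card_le_card (union_subset (fun i hi => ?_) fun i hi => mem_filter.2 ⟨mem_univ i, hS i hi⟩)
  obtain ⟨hiT, hfi⟩ := mem_filter.1 hi
  simpa [hgT i hiT] using mul_pos hε hfi

theorem stmt_9_general (r n : ℕ) (V : Fin n → (Fin r → ℝ))
    (T : Finset (Fin n))
    (rW : ℕ)
    (a b : ℕ)
    (hW : ∃ w : Fin r → ℝ, rW + a ≤ (T.filter (fun i => 0 < ∑ k, w k * V i k)).card)
    (hQ : ∃ w : Fin r → ℝ, (∀ j ∈ T, ∑ k, w k * V j k = 0) ∧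
      (r - rW) + b ≤ (Finset.univ.filter (fun i => i ∉ T ∧ 0 < ∑ k, w k * V i k)).card) :
    ∃ w : Fin r → ℝ, r + a + b ≤ (Finset.univ.filter (fun i => 0 < ∑ k, w k * V i k)).card := by
  obtain ⟨w₁, hw₁⟩ := hW
  obtain ⟨w₂, hw₂T, hw₂⟩ := hQ
  obtain ⟨ε, -, hcard⟩ :=
    exists_card_filter_pos_add_card_le T (fun i => w₁ ⬝ᵥ V i) (fun i => w₂ ⬝ᵥ V i) hw₂T
  refine ⟨w₂ + ε • w₁, ?_⟩
  have htilt : ∀ i, (w₂ + ε • w₁) ⬝ᵥ V i = w₂ ⬝ᵥ V i + ε * w₁ ⬝ᵥ V i := fun i => by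
    rw [add_dotProduct, smul_dotProduct, smul_eq_mul]
  change r + a + b ≤ #(univ.filter fun i => 0 < (w₂ + ε • w₁) ⬝ᵥ V i)
  simp only [htilt]
  change rW + a ≤ #(T.filter fun i => 0 < w₁ ⬝ᵥ V i) at hw₁
  change r - rW + b ≤ #(univ.filter fun i => i ∉ T ∧ 0 < w₂ ⬝ᵥ V i) at hw₂
  omega

/-- Let `V` be a vector configuration spanning `ℝ^r` and `W = V|_T` a subconfiguration with
`lin(W) ∩ V = W`. If `deg*(W) ≥ a` (witnessed by a hyperplane of `lin(W)`, i.e. an ambient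
functional) and `deg*(V/W) ≥ b` (witnessed by an ambient hyperplane containing `lin(W)`,
the rank of `V/W` being `r - rank(W)`), then `deg*(V) ≥ a + b`. -/
theorem stmt_9 (r n : ℕ) (V : Fin n → (Fin r → ℝ))
    (hspan : Submodule.span ℝ (Set.range V) = ⊤)
    (T : Finset (Fin n))
    (hclosed : ∀ j : Fin n, V j ∈ Submodule.span ℝ (V '' (T : Set (Fin n))) ↔ j ∈ T)
    (rW : ℕ) (hrW : rW = Module.finrank ℝ (Submodule.span ℝ (V '' (T : Set (Fin n)))))
    (a b : ℕ)
    (hW : ∃ w : Fin r → ℝ, rW + a ≤ (T.filter (fun i => 0 < ∑ k, w k * V i k)).card)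
    (hQ : ∃ w : Fin r → ℝ, (∀ j ∈ T, ∑ k, w k * V j k = 0) ∧
      (r - rW) + b ≤ (Finset.univ.filter (fun i => i ∉ T ∧ 0 < ∑ k, w k * V i k)).card) :
    ∃ w : Fin r → ℝ, r + a + b ≤ (Finset.univ.filter (fun i => 0 < ∑ k, w k * V i k)).card :=
  stmt_9_general r n V T rW a b hW hQ
end

section
/- An irreducible vector configuration V in R^r (i.e., not containing the zero vector) of dual degree δ contains at most 2r + 2δ vectors. -/
/-!
Finitely many proper hyperplanes `{w | w ⬝ᵥ V i = 0}` cannot cover `ℝ^r`, so some `w` has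
`w ⬝ᵥ V i ≠ 0` for every `i`. Then every vector lies in the open half-space of `w` or of `-w`,
and each of these contains at most `r + δ` vectors.
-/

open Finset

theorem exists_forall_dotProduct_ne_zero {K m ι : Type*} [Field K] [Infinite K]
    [Fintype m] [DecidableEq m] [Finite ι] (v : ι → m → K) (hv : ∀ i, v i ≠ 0) :
    ∃ w : m → K, ∀ i, w ⬝ᵥ v i ≠ 0 := by
  obtain ⟨f, hf⟩ := Module.exists_dual_forall_apply_ne_zero (K := K) v hv
  refine ⟨(dotProductEquiv K m).symm f, fun i => ?_⟩
  simpa only [← dotProductEquiv_apply_apply, LinearEquiv.apply_symm_apply] using hf i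

theorem Fintype.card_le_card_filter_pos_add_card_filter_neg_pos {ι α : Type*} [Fintype ι]
    [AddCommGroup α] [LinearOrder α] [IsOrderedAddMonoid α] (f : ι → α) (hf : ∀ i, f i ≠ 0) :
    Fintype.card ι ≤ #{i | 0 < f i} + #{i | 0 < -f i} := by
  calc Fintype.card ι = #{i | 0 < f i} + #{i | ¬ 0 < f i} :=
        (card_filter_add_card_filter_not _).symm
    _ ≤ #{i | 0 < f i} + #{i | 0 < -f i} :=
        add_le_add_right (card_le_card <| monotone_filter_right _ fun i _ hi =>
          neg_pos.mpr ((not_lt.mp hi).lt_of_ne (hf i))) _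

theorem stmt_11_general (r n δ : ℕ) (V : Fin n → (Fin r → ℝ))
    (hz : ∀ i, V i ≠ 0)
    (hdeg : ∀ w : Fin r → ℝ,
      (Finset.univ.filter (fun i => 0 < ∑ k, w k * V i k)).card ≤ r + δ) :
    n ≤ 2 * r + 2 * δ := by
  obtain ⟨w, hw⟩ := exists_forall_dotProduct_ne_zero V hz
  have hsplit := Fintype.card_le_card_filter_pos_add_card_filter_neg_pos (fun i => w ⬝ᵥ V i) hw
  have hpos : #{i | 0 < w ⬝ᵥ V i} ≤ r + δ := hdeg w
  have hneg : #{i | 0 < -(w ⬝ᵥ V i)} ≤ r + δ := by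
    have h : #{i | 0 < -w ⬝ᵥ V i} ≤ r + δ := hdeg (-w)
    simpa only [neg_dotProduct] using h
  rw [Fintype.card_fin] at hsplit
  omega

/-- An irreducible vector configuration `V` spanning `ℝ^r` (no element is the zero vector)
of dual degree at most `δ` contains at most `2r + 2δ` vectors. -/
theorem stmt_11 (r n δ : ℕ) (V : Fin n → (Fin r → ℝ))
    (hz : ∀ i, V i ≠ 0)
    (hspan : Submodule.span ℝ (Set.range V) = ⊤)
    (hdeg : ∀ w : Fin r → ℝ,
      (Finset.univ.filter (fun i => 0 < ∑ k, w k * V i k)).card ≤ r + δ) :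
    n ≤ 2 * r + 2 * δ :=
  stmt_11_general r n δ V hz hdeg
end

section
/- Let V be an irreducible vector configuration of rank r with r+d+1 elements (none equal to 0) and dual degree δ. Then r = d+1-2δ if and only if V is centrally symmetric up to rescaling by positive scalars (i.e., the multiset of rays spanned by elements of V pairs up into antipodal pairs). -/
/-!
The condition `r + 2δ = d + 1` says that the maximal number `r + δ` of vectors in an open
half-space is exactly half of the `2m = r + d + 1` vectors.

If at most `m` of the `2m` vectors lie in any open half-space, then every half-space bounded by a
hyperplane avoiding all the vectors contains exactly `m` of them. Given a nonzero `u`, take a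
functional `φ` vanishing on `u` but on no vector outside the line `ℝ ∙ u`, and perturb it to
`φ ± tψ` with `ψ u = 1` and `t > 0` small: the two perturbations pick up the same vectors off the
line, and besides those exactly the vectors on the ray of `u`, resp. of `-u`. Hence every ray
carries as many vectors as its opposite, and the vectors can be matched in antipodal pairs.

Conversely, such a matching sends each open half-space into the complementary closed one, so no
open half-space contains more than half of the vectors, while of a generic half-space and its
opposite one contains at least half of them.
-/

open Finset Filter Topology Module Pointwise

theorem Module.Dual.exists_forall_apply_ne_zero {K M ι : Type*} [Field K] [Infinite K]
    [AddCommGroup M] [Module K M] [Finite ι] {f : ι → Dual K M} (hf : ∀ i, f i ≠ 0) :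
    ∃ x, ∀ i, f i x ≠ 0 := by
  have := Fintype.ofFinite ι
  have hunion := Submodule.iUnion_ssubset_of_forall_ne_top_of_card_lt univ
    (fun i => LinearMap.ker (f i)) (fun i => by simpa [LinearMap.ker_eq_top] using hf i)
    (by simp [ENat.card_eq_top_of_infinite])
  obtain ⟨x, -, hx⟩ := Set.exists_of_ssubset hunion
  exact ⟨x, by simpa using hx⟩

theorem Submodule.exists_dual_forall_apply_eq_zero_iff {K E ι : Type*} [Field K] [Infinite K]
    [AddCommGroup E] [Module K E] [Finite ι] (p : Submodule K E) (V : ι → E) :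
    ∃ φ : Dual K E, ∀ i, φ (V i) = 0 ↔ V i ∈ p := by
  obtain ⟨φ, hφ⟩ := Dual.exists_forall_apply_ne_zero (M := p.dualAnnihilator)
    (f := fun i : {i // V i ∉ p} => (Dual.eval K E (V i)).comp p.dualAnnihilator.subtype)
    fun i h => by
      obtain ⟨ψ, hψ, hpψ⟩ := exists_le_ker_of_notMem i.2
      have hψp : ψ ∈ p.dualAnnihilator := (mem_dualAnnihilator ψ).2 fun w hw => hpψ hw
      exact hψ (by simpa using LinearMap.congr_fun h ⟨ψ, hψp⟩)
  refine ⟨φ, fun i => ⟨fun h => ?_, fun h => (mem_dualAnnihilator _).1 φ.2 _ h⟩⟩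
  by_contra hi
  exact hφ ⟨i, hi⟩ h

theorem eventually_sign_add_mul (a b : ℝ) :
    ∀ᶠ t in 𝓝[>] 0,
      SignType.sign (a + t * b) = if a = 0 then SignType.sign b else SignType.sign a := by
  by_cases ha : a = 0
  · filter_upwards [self_mem_nhdsWithin] with t (ht : 0 < t)
    simp [ha, sign_mul, sign_pos ht]
  · have hlim : Tendsto (fun t => a + t * b) (𝓝[>] 0) (𝓝 a) := tendsto_nhdsWithin_of_tendsto_nhds
      (by simpa using (tendsto_id (x := 𝓝 (0 : ℝ))).mul_const b |>.const_add a)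
    have := (continuousAt_sign_of_ne_zero ha).tendsto.comp hlim
    rw [nhds_discrete, tendsto_pure] at this
    simpa [ha] using this

theorem sameRay_iff_mem_span_singleton_and_pos {E : Type*} [AddCommGroup E] [Module ℝ E]
    {u v : E} {ψ : Dual ℝ E} (hu : u ≠ 0) (hv : v ≠ 0) (hψ : ψ u = 1) :
    SameRay ℝ u v ↔ v ∈ ℝ ∙ u ∧ 0 < ψ v := by
  rw [← exists_pos_left_iff_sameRay hu hv, Submodule.mem_span_singleton]
  constructor
  · rintro ⟨c, hc, rfl⟩
    exact ⟨⟨c, rfl⟩, by simpa [hψ] using hc⟩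
  · rintro ⟨⟨c, rfl⟩, hc⟩
    exact ⟨c, by simpa [hψ] using hc, rfl⟩

theorem Finset.exists_involution_neg_of_card_fiber_eq {ι R : Type*} [DecidableEq ι]
    [InvolutiveNeg R] [DecidableEq R] (hR : ∀ x : R, x ≠ -x) (ρ : ι → R) (S : Finset ι)
    (hS : ∀ i ∈ S, #{j ∈ S | ρ j = ρ i} = #{j ∈ S | ρ j = -ρ i}) :
    ∃ σ : ι → ι, ∀ i ∈ S, σ i ∈ S ∧ σ (σ i) = i ∧ ρ (σ i) = -ρ i := by
  induction S using Finset.strongInduction with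
  | H S ih =>
    obtain rfl | ⟨i, hi⟩ := S.eq_empty_or_nonempty
    · exact ⟨id, by simp⟩
    obtain ⟨j, hjS, hj⟩ : ∃ j ∈ S, ρ j = -ρ i := by
      have : 0 < #{j ∈ S | ρ j = -ρ i} := hS i hi ▸ card_pos.2 ⟨i, mem_filter.2 ⟨hi, rfl⟩⟩
      exact (card_pos.1 this).imp fun j hj => mem_filter.1 hj
    have hji : j ≠ i := by rintro rfl; exact hR _ hj
    set S' := (S.erase i).erase j
    have hS'S : S' ⊂ S := (erase_subset j _).trans_ssubset (erase_ssubset hi)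
    have hmem : ∀ k, k ∈ S' ↔ k ∈ S ∧ k ≠ i ∧ k ≠ j := fun k => by
      simp only [S', mem_erase]; tauto
    have hcard : ∀ x, #{k ∈ S | ρ k = x} =
        (if ρ i = x then 1 else 0) + (if ρ j = x then 1 else 0) + #{k ∈ S' | ρ k = x} := fun x => by
      simp only [card_filter, add_assoc]
      rw [← add_sum_erase _ _ hi, ← add_sum_erase _ _ (mem_erase.2 ⟨hji, hjS⟩)]
    obtain ⟨σ, hσ⟩ := ih S' hS'S fun k hk => by
      have := hS k ((hmem k).1 hk).1
      simp only [hcard, hj, neg_eq_iff_eq_neg, neg_neg] at this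
      split_ifs at this <;> omega
    refine ⟨fun k => if k = i then j else if k = j then i else σ k, fun k hk => ?_⟩
    by_cases hki : k = i
    · subst hki; simp [hji, hjS, hj]
    by_cases hkj : k = j
    · subst hkj; simp [hji, hi, hj]
    obtain ⟨hσS', hσσ, hσρ⟩ := hσ k ((hmem k).2 ⟨hk, hki, hkj⟩)
    obtain ⟨hσS, hσi, hσj⟩ := (hmem (σ k)).1 hσS'
    simp [hki, hkj, hσi, hσj, hσS, hσσ, hσρ]

section HalfSpaces

variable {ι E : Type*} [Fintype ι] [AddCommGroup E] [Module ℝ E] {V : ι → E} {m : ℕ}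

theorem card_pos_add_card_pos_neg {φ : Dual ℝ E} (hφ : ∀ i, φ (V i) ≠ 0) :
    #{i | 0 < φ (V i)} + #{i | 0 < (-φ) (V i)} = Fintype.card ι := by
  rw [← card_univ, ← card_filter_add_card_filter_not (s := univ) (fun i => 0 < φ (V i))]
  congr 2
  refine filter_congr fun i _ => ?_
  simp only [LinearMap.neg_apply, Left.neg_pos_iff, not_lt]
  exact ⟨le_of_lt, fun h => h.lt_of_ne (hφ i)⟩

theorem card_le_two_mul_of_forall_card_pos_le (hV : ∀ i, V i ≠ 0)
    (hdeg : ∀ φ : Dual ℝ E, #{i | 0 < φ (V i)} ≤ m) : Fintype.card ι ≤ 2 * m := by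
  obtain ⟨φ, hφ⟩ := (⊥ : Submodule ℝ E).exists_dual_forall_apply_eq_zero_iff V
  have := card_pos_add_card_pos_neg (V := V) fun i h => hV i (by simpa using (hφ i).1 h)
  have := hdeg φ
  have := hdeg (-φ)
  omega

theorem two_mul_card_pos_le_of_neg_smul {σ : ι → ι} (hσ : σ.Injective)
    (hV : ∀ i, ∃ c : ℝ, c < 0 ∧ V (σ i) = c • V i) (φ : Dual ℝ E) :
    2 * #{i | 0 < φ (V i)} ≤ Fintype.card ι := by
  have : #{i | 0 < φ (V i)} ≤ #{i | ¬ 0 < φ (V i)} := by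
    refine card_le_card_of_injOn σ (fun i hi => ?_) hσ.injOn
    obtain ⟨c, hc, hci⟩ := hV i
    simp only [coe_filter, mem_univ, true_and, Set.mem_ofPred_eq, hci, map_smul, smul_eq_mul,
      not_lt] at hi ⊢
    exact (mul_neg_of_neg_of_pos hc hi).le
  have := card_filter_add_card_filter_not (s := univ) (fun i => 0 < φ (V i))
  rw [card_univ] at this
  omega

theorem card_eq_two_mul_of_neg_smul (hV : ∀ i, V i ≠ 0)
    (hdeg : ∀ φ : Dual ℝ E, #{i | 0 < φ (V i)} ≤ m) (hm : ∃ φ : Dual ℝ E, #{i | 0 < φ (V i)} = m)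
    {σ : ι → ι} (hσ : σ.Injective) (hσV : ∀ i, ∃ c : ℝ, c < 0 ∧ V (σ i) = c • V i) :
    Fintype.card ι = 2 * m := by
  obtain ⟨φ, hφ⟩ := hm
  have := two_mul_card_pos_le_of_neg_smul hσ hσV φ
  have := card_le_two_mul_of_forall_card_pos_le hV hdeg
  omega

variable (hdeg : ∀ φ : Dual ℝ E, #{i | 0 < φ (V i)} ≤ m) (hn : Fintype.card ι = 2 * m)
include hdeg hn

theorem card_pos_eq_of_forall_ne_zero {φ : Dual ℝ E} (hφ : ∀ i, φ (V i) ≠ 0) :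
    #{i | 0 < φ (V i)} = m := by
  have := card_pos_add_card_pos_neg hφ
  have := hdeg φ
  have := hdeg (-φ)
  omega

/-- For small `t > 0` the functional `φ + t • ψ` avoids all the vectors, and it is positive
exactly where `(φ, ψ)` is lexicographically positive. -/
theorem card_pos_add_card_lex_pos {φ ψ : Dual ℝ E} (hψ : ∀ i, φ (V i) = 0 → ψ (V i) ≠ 0) :
    #{i | 0 < φ (V i)} + #{i | φ (V i) = 0 ∧ 0 < ψ (V i)} = m := by
  classical
  obtain ⟨t, ht⟩ :=
    (eventually_all.2 fun i => eventually_sign_add_mul (φ (V i)) (ψ (V i))).exists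
  have hsign : ∀ i, SignType.sign ((φ + t • ψ) (V i)) =
      if φ (V i) = 0 then SignType.sign (ψ (V i)) else SignType.sign (φ (V i)) := by
    simpa using ht
  have hgen : ∀ i, (φ + t • ψ) (V i) ≠ 0 := by
    intro i
    rw [← sign_ne_zero, hsign]
    split_ifs with h
    exacts [sign_ne_zero.2 (hψ i h), sign_ne_zero.2 h]
  rw [← card_pos_eq_of_forall_ne_zero hdeg hn hgen, ← card_union_of_disjoint, ← filter_or]
  · refine congrArg card (filter_congr fun i _ => ?_)
    rw [← sign_eq_one_iff (a := (φ + t • ψ) (V i)), hsign]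
    split_ifs with h <;> simp [h, sign_eq_one_iff]
  · exact disjoint_filter.2 fun i _ h h' => h.ne' h'.1

open scoped Classical in
theorem card_sameRay_eq_card_sameRay_neg (hV : ∀ i, V i ≠ 0) {u : E} (hu : u ≠ 0) :
    #{i | SameRay ℝ u (V i)} = #{i | SameRay ℝ (-u) (V i)} := by
  obtain ⟨φ, hφ⟩ := (ℝ ∙ u).exists_dual_forall_apply_eq_zero_iff V
  have key : ∀ (u' : E) (ψ : Dual ℝ E), ℝ ∙ u' = ℝ ∙ u → u' ≠ 0 → ψ u' = 1 →
      #{i | 0 < φ (V i)} + #{i | SameRay ℝ u' (V i)} = m := by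
    intro u' ψ hspan hu' hψ
    have hray : ∀ i, SameRay ℝ u' (V i) ↔ φ (V i) = 0 ∧ 0 < ψ (V i) := fun i => by
      rw [sameRay_iff_mem_span_singleton_and_pos hu' (hV i) hψ, hφ, hspan]
    simp_rw [hray]
    refine card_pos_add_card_lex_pos hdeg hn fun i hi => ?_
    obtain ⟨c, hc⟩ := Submodule.mem_span_singleton.1 (hspan ▸ (hφ i).1 hi)
    rw [← hc, map_smul, hψ, smul_eq_mul, mul_one]
    rintro rfl
    exact hV i (by rw [← hc, zero_smul])
  obtain ⟨ψ, hψ⟩ := Projective.exists_dual_eq_one ℝ hu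
  have h₁ := key u ψ rfl hu hψ
  have h₂ := key (-u) (-ψ) (by rw [← Set.neg_singleton, Submodule.span_neg])
    (neg_ne_zero.2 hu) (by simp [hψ])
  omega

theorem exists_involution_neg_smul_of_forall_card_pos_le (hV : ∀ i, V i ≠ 0) :
    ∃ σ : Equiv.Perm ι, Function.Involutive σ ∧ (∀ i, σ i ≠ i) ∧
      ∀ i, ∃ c : ℝ, c < 0 ∧ V (σ i) = c • V i := by
  classical
  let ρ i := rayOfNeZero ℝ (V i) (hV i)
  obtain ⟨σ, hσ⟩ := univ.exists_involution_neg_of_card_fiber_eq Ray.ne_neg_self ρ fun i _ => by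
    simpa [ρ, ray_eq_iff, SameRay.sameRay_comm] using
      card_sameRay_eq_card_sameRay_neg hdeg hn hV (hV i)
  have hinv : Function.Involutive σ := fun i => (hσ i (mem_univ i)).2.1
  have hρ : ∀ i, ρ (σ i) = -ρ i := fun i => (hσ i (mem_univ i)).2.2
  refine ⟨hinv.toPerm, hinv, fun i h => Ray.ne_neg_self (ρ i) ?_, fun i => ?_⟩
  · simpa only [show σ i = i from h] using hρ i
  · obtain ⟨c, hc, hci⟩ :=
      ((ray_eq_iff _ _).1 (hρ i)).exists_pos_right (hV _) (neg_ne_zero.2 (hV i))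
    exact ⟨-c, neg_neg_of_pos hc, by simpa using hci⟩

end HalfSpaces

theorem stmt_12_general (r d δ : ℕ) (V : Fin (r + d + 1) → (Fin r → ℝ))
    (hz : ∀ i, V i ≠ 0)
    (hdeg1 : ∀ w : Fin r → ℝ,
      (Finset.univ.filter (fun i => 0 < ∑ k, w k * V i k)).card ≤ r + δ)
    (hdeg2 : ∃ w : Fin r → ℝ, w ≠ 0 ∧
      (Finset.univ.filter (fun i => 0 < ∑ k, w k * V i k)).card = r + δ) :
    r + 2 * δ = d + 1 ↔
      ∃ σ : Equiv.Perm (Fin (r + d + 1)), Function.Involutive σ ∧ (∀ i, σ i ≠ i) ∧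
        ∀ i, ∃ c : ℝ, c < 0 ∧ V (σ i) = c • V i := by
  have hdeg : ∀ φ : Dual ℝ (Fin r → ℝ), #{i | 0 < φ (V i)} ≤ r + δ := fun φ => by
    obtain ⟨w, rfl⟩ := (dotProductEquiv ℝ (Fin r)).surjective φ
    exact hdeg1 w
  constructor
  · intro h
    have hn : Fintype.card (Fin (r + d + 1)) = 2 * (r + δ) := by
      simp only [Fintype.card_fin]; omega
    exact exists_involution_neg_smul_of_forall_card_pos_le hdeg hn hz
  · rintro ⟨σ, -, -, hσ⟩
    obtain ⟨w, -, hw⟩ := hdeg2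
    have := card_eq_two_mul_of_neg_smul hz hdeg ⟨dotProductEquiv ℝ _ w, hw⟩ σ.injective hσ
    simp only [Fintype.card_fin] at this
    omega

/-- An irreducible vector configuration `V` of rank `r` with `r+d+1` nonzero elements and
dual degree exactly `δ` satisfies `r = d + 1 - 2δ` if and only if `V` is centrally
symmetric up to rescaling by positive scalars, i.e. there is a fixed-point-free involution
matching each element with a negative scalar multiple of it. -/
theorem stmt_12 (r d δ : ℕ) (V : Fin (r + d + 1) → (Fin r → ℝ))
    (hz : ∀ i, V i ≠ 0)
    (hspan : Submodule.span ℝ (Set.range V) = ⊤)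
    (hdeg1 : ∀ w : Fin r → ℝ,
      (Finset.univ.filter (fun i => 0 < ∑ k, w k * V i k)).card ≤ r + δ)
    (hdeg2 : ∃ w : Fin r → ℝ, w ≠ 0 ∧
      (Finset.univ.filter (fun i => 0 < ∑ k, w k * V i k)).card = r + δ) :
    r + 2 * δ = d + 1 ↔
      ∃ σ : Equiv.Perm (Fin (r + d + 1)), Function.Involutive σ ∧ (∀ i, σ i ≠ i) ∧
        ∀ i, ∃ c : ℝ, c < 0 ∧ V (σ i) = c • V i :=
  stmt_12_general r d δ V hz hdeg1 hdeg2
end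

section
/- Any vector configuration V in R^r with deg*(V) ≥ 0 and dual codegree codeg*(V) ≥ 1 contains a totally cyclic subconfiguration W ⊆ V with codeg*(W) = codeg*(V). -/
/-!
Take for `W` the vectors of `V` that occur with positive coefficient in some nonnegative linear
dependence of `V`. Adding up such dependences gives one whose support is exactly `W`, and pairing
it with a linear functional shows that `W` is totally cyclic. That same dependence shows that no
convex combination of `V \ W` lies in the span of `W`, so Hahn–Banach gives a functional `u`
vanishing on `W` and positive on `V \ W`. For `w ≠ 0` and small `ε > 0`, the closed positive side
of `ε w - u` contains only vectors of `W`, and only those on the closed positive side of `w`;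
hence `codeg*(W) ≤ codeg*(V)`, and the reverse inequality holds because `W ⊆ V`.
-/

open Finset Filter Topology
open scoped Pointwise

theorem exists_pos_forall_mul_lt {ι : Type*} [Finite ι] (a b : ι → ℝ) :
    ∃ ε > 0, ∀ i, 0 < b i → ε * a i < b i := by
  have hsmall : ∀ᶠ ε in 𝓝[>] (0 : ℝ), ∀ i, 0 < b i → ε * a i < b i := by
    refine eventually_all.2 fun i => ?_
    by_cases hb : 0 < b i
    · have hlim : Tendsto (fun ε => ε * a i) (𝓝[>] 0) (𝓝 0) := by
        simpa using ((continuous_mul_const (a i)).tendsto 0).mono_left nhdsWithin_le_nhds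
      exact (hlim.eventually (gt_mem_nhds hb)).mono fun _ h _ => h
    · exact .of_forall fun _ h => absurd h hb
  obtain ⟨ε, hε, hpos⟩ := (hsmall.and self_mem_nhdsWithin).exists
  exact ⟨ε, hpos, hε⟩

theorem exists_strongDual_eq_zero_pos_of_zero_notMem_add {E : Type*} [AddCommGroup E]
    [Module ℝ E] [TopologicalSpace E] [IsTopologicalAddGroup E] [ContinuousSMul ℝ E]
    [LocallyConvexSpace ℝ E] {K : Set E} (hK : IsCompact K) (hKc : Convex ℝ K)
    {L : Submodule ℝ E} (hL : IsClosed (L : Set E)) (h : (0 : E) ∉ K + L) :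
    ∃ f : StrongDual ℝ E, (∀ z ∈ L, f z = 0) ∧ ∀ x ∈ K, 0 < f x := by
  rcases K.eq_empty_or_nonempty with rfl | ⟨x₀, hx₀⟩
  · exact ⟨0, fun _ _ => rfl, by simp⟩
  obtain ⟨f, t, hf0, hft⟩ :=
    geometric_hahn_banach_point_closed (hKc.add L.convex) (hL.add_left_of_isCompact hK) h
  rw [map_zero] at hf0
  have hsum : ∀ x ∈ K, ∀ z ∈ L, t < f x + f z := fun x hx z hz => by
    simpa using hft _ (Set.add_mem_add hx hz)
  refine ⟨f, fun z hz => ?_, fun x hx => hf0.trans (by simpa using hsum x hx 0 L.zero_mem)⟩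
  by_contra hz0
  -- `f` is bounded below on `x₀ + L`, which it would not be if it were nonzero on `L`.
  have := hsum x₀ hx₀ _ (L.smul_mem (-(f x₀ / f z)) hz)
  rw [map_smul, smul_eq_mul, neg_mul, div_mul_cancel₀ _ hz0, add_neg_cancel] at this
  linarith

section CyclicPart

variable {ι E : Type*} [Fintype ι] [AddCommGroup E] [Module ℝ E]

/-- Indexes the largest totally cyclic subconfiguration of `V`. -/
noncomputable def cyclicPart (V : ι → E) : Finset ι :=
  open Classical in {i | ∃ c : ι → ℝ, (∀ j, 0 ≤ c j) ∧ ∑ j, c j • V j = 0 ∧ 0 < c i}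

theorem mem_cyclicPart {V : ι → E} {i : ι} :
    i ∈ cyclicPart V ↔ ∃ c : ι → ℝ, (∀ j, 0 ≤ c j) ∧ ∑ j, c j • V j = 0 ∧ 0 < c i := by
  classical
  simp [cyclicPart]

theorem exists_dependence_pos_iff_mem_cyclicPart (V : ι → E) :
    ∃ c : ι → ℝ, (∀ j, 0 ≤ c j) ∧ ∑ j, c j • V j = 0 ∧ ∀ i, 0 < c i ↔ i ∈ cyclicPart V := by
  have hchoice : ∀ i, ∃ c : ι → ℝ,
      (∀ j, 0 ≤ c j) ∧ ∑ j, c j • V j = 0 ∧ (i ∈ cyclicPart V → 0 < c i) := by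
    intro i
    by_cases hi : i ∈ cyclicPart V
    · obtain ⟨c, hc0, hdep, hpos⟩ := mem_cyclicPart.1 hi
      exact ⟨c, hc0, hdep, fun _ => hpos⟩
    · exact ⟨0, fun _ => le_rfl, by simp, fun h => absurd h hi⟩
  choose c hc0 hdep hpos using hchoice
  have hsum0 : ∀ j, 0 ≤ ∑ i, c i j := fun j => sum_nonneg fun i _ => hc0 i j
  have hsumdep : ∑ j, (∑ i, c i j) • V j = 0 := by
    simp_rw [sum_smul]
    rw [sum_comm]
    simp [hdep]
  refine ⟨fun j => ∑ i, c i j, hsum0, hsumdep, fun i =>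
    ⟨fun h => mem_cyclicPart.2 ⟨_, hsum0, hsumdep, h⟩, fun hi => ?_⟩⟩
  exact (hpos i hi).trans_le (single_le_sum (fun k _ => hc0 k i) (mem_univ i))

theorem exists_pos_of_exists_ne_zero_cyclicPart (V : ι → E) (f : E →ₗ[ℝ] ℝ)
    (h : ∃ i ∈ cyclicPart V, f (V i) ≠ 0) : ∃ i ∈ cyclicPart V, 0 < f (V i) := by
  obtain ⟨c, hc0, hdep, hpos⟩ := exists_dependence_pos_iff_mem_cyclicPart V
  obtain ⟨i, hi, hne⟩ := h
  by_contra! hle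
  have hterm : ∀ j ∈ univ, c j * f (V j) ≤ 0 := fun j _ => by
    rcases (hc0 j).eq_or_lt with hj | hj
    · rw [← hj, zero_mul]
    · exact mul_nonpos_of_nonneg_of_nonpos hj.le (hle j ((hpos j).1 hj))
  have hsum : ∑ j, c j * f (V j) = 0 := by
    simpa [map_sum, map_smul] using congrArg f hdep
  have hci := (sum_eq_zero_iff_of_nonpos hterm).1 hsum i (mem_univ i)
  exact hne ((mul_eq_zero.1 hci).resolve_left ((hpos i).2 hi).ne')

theorem dependence_eq_zero_of_notMem_cyclicPart {V : ι → E} {e : ι → ℝ}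
    (hdep : ∑ j, e j • V j = 0) (he : ∀ j ∉ cyclicPart V, 0 ≤ e j) :
    ∀ j ∉ cyclicPart V, e j = 0 := by
  obtain ⟨c, hc0, hcdep, hpos⟩ := exists_dependence_pos_iff_mem_cyclicPart V
  obtain ⟨ε, hε, hlt⟩ := exists_pos_forall_mul_lt (fun j => -e j) c
  -- `ε • e + c` is a nonnegative dependence, so its support lies in `cyclicPart V`.
  have hd0 : ∀ j, 0 ≤ ε * e j + c j := fun j => by
    by_cases hcj : 0 < c j
    · linarith [hlt j hcj]
    · have hj : j ∉ cyclicPart V := fun h => hcj ((hpos j).2 h)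
      exact add_nonneg (mul_nonneg hε.le (he j hj)) (hc0 j)
  have hddep : ∑ j, (ε * e j + c j) • V j = 0 := by
    simp [add_smul, mul_smul, sum_add_distrib, ← smul_sum, hdep, hcdep]
  intro j hj
  refine le_antisymm ?_ (he j hj)
  by_contra! hej
  exact hj (mem_cyclicPart.2 ⟨_, hd0, hddep, add_pos_of_pos_of_nonneg (mul_pos hε hej) (hc0 j)⟩)

theorem notMem_stdSimplex_of_dependence {V : ι → E} {a b : ι → ℝ}
    (ha : ∀ i ∈ cyclicPart V, a i = 0) (hb : ∀ j ∉ cyclicPart V, b j = 0)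
    (hdep : ∑ j, (a j + b j) • V j = 0) : a ∉ stdSimplex ℝ ι := by
  intro hsimplex
  have hoff := dependence_eq_zero_of_notMem_cyclicPart hdep
    (fun j hj => by simpa [hb j hj] using hsimplex.1 j)
  have ha0 : a = 0 := funext fun j => by
    by_cases hj : j ∈ cyclicPart V
    · exact ha j hj
    · simpa [hb j hj] using hoff j hj
  simpa [ha0] using hsimplex.2

theorem exists_strongDual_eq_zero_cyclicPart_pos [TopologicalSpace E] [IsTopologicalAddGroup E]
    [ContinuousSMul ℝ E] [LocallyConvexSpace ℝ E] [T2Space E] (V : ι → E) :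
    ∃ f : StrongDual ℝ E, (∀ i ∈ cyclicPart V, f (V i) = 0) ∧
      ∀ j ∉ cyclicPart V, 0 < f (V j) := by
  classical
  set T := cyclicPart V
  let Φ := Fintype.linearCombination ℝ V
  let Q : Submodule ℝ (ι → ℝ) := Submodule.pi T fun _ => ⊥
  let P : Submodule ℝ (ι → ℝ) := Submodule.pi (↑T)ᶜ fun _ => ⊥
  -- `Φ '' S` is the convex hull of the `V j` with `j ∉ T`, and `P.map Φ` is the span of the
  -- `V i` with `i ∈ T`.
  let S : Set (ι → ℝ) := stdSimplex ℝ ι ∩ Q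
  have hS : IsCompact S := (isCompact_stdSimplex ℝ ι).inter_right Q.closed_of_finiteDimensional
  have h0 : (0 : E) ∉ Φ '' S + P.map Φ := by
    rintro ⟨_, ⟨a, ⟨ha, haQ⟩, rfl⟩, _, ⟨b, hbP, rfl⟩, hab⟩
    refine notMem_stdSimplex_of_dependence (fun i hi => (Submodule.mem_bot ℝ).1 (haQ i hi))
      (fun j hj => (Submodule.mem_bot ℝ).1 (hbP j hj)) ?_ ha
    simpa [Φ, Fintype.linearCombination_apply, add_smul, sum_add_distrib] using hab
  obtain ⟨f, hfL, hfK⟩ := exists_strongDual_eq_zero_pos_of_zero_notMem_add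
    (hS.image Φ.continuous_of_finiteDimensional)
    (((convex_stdSimplex ℝ ι).inter Q.convex).linear_image Φ)
    (P.map Φ).closed_of_finiteDimensional h0
  refine ⟨f, fun i hi => hfL _ ⟨Pi.single i 1, fun k hk => ?_, by simp [Φ]⟩,
    fun j hj => hfK _ ⟨Pi.single j 1, ⟨single_mem_stdSimplex ℝ j, fun k hk => ?_⟩, by simp [Φ]⟩⟩
  · exact (Submodule.mem_bot ℝ).2 (Pi.single_eq_of_ne (by rintro rfl; exact hk hi) 1)
  · exact (Submodule.mem_bot ℝ).2 (Pi.single_eq_of_ne (by rintro rfl; exact hj hk) 1)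

end CyclicPart

section Coordinates

variable {ι κ : Type*} [Fintype ι] [Fintype κ]

theorem exists_dotProduct_eq_zero_cyclicPart_pos (V : ι → κ → ℝ) :
    ∃ u : κ → ℝ, (∀ i ∈ cyclicPart V, u ⬝ᵥ V i = 0) ∧ ∀ j ∉ cyclicPart V, 0 < u ⬝ᵥ V j := by
  classical
  obtain ⟨f, hzero, hpos⟩ := exists_strongDual_eq_zero_cyclicPart_pos V
  set u := (dotProductEquiv ℝ κ).symm f.toLinearMap
  have hf : ∀ x, f x = u ⬝ᵥ x := fun x => by
    rw [← ContinuousLinearMap.coe_coe f, ← (dotProductEquiv ℝ κ).apply_symm_apply f.toLinearMap]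
    rfl
  exact ⟨u, fun i hi => (hf _).symm.trans (hzero i hi), fun j hj => (hpos j hj).trans_eq (hf _)⟩

theorem exists_ne_zero_filter_subset_cyclicPart (V : ι → κ → ℝ) {w : κ → ℝ} (hw : w ≠ 0) :
    ∃ w' ≠ 0, univ.filter (fun i => 0 ≤ w' ⬝ᵥ V i) ⊆
      (cyclicPart V).filter (fun i => 0 ≤ w ⬝ᵥ V i) := by
  by_cases hall : ∀ j, j ∈ cyclicPart V
  · exact ⟨w, hw, filter_subset_filter _ fun j _ => hall j⟩
  obtain ⟨j₀, hj₀⟩ := not_forall.1 hall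
  obtain ⟨u, hzero, hpos⟩ := exists_dotProduct_eq_zero_cyclicPart_pos V
  obtain ⟨ε, hε, hlt⟩ := exists_pos_forall_mul_lt (fun i => w ⬝ᵥ V i) (fun i => u ⬝ᵥ V i)
  -- Tilting `w` by `-u` pushes every vector outside `cyclicPart V` to the negative side.
  have hw' : ∀ i, (ε • w - u) ⬝ᵥ V i = ε * w ⬝ᵥ V i - u ⬝ᵥ V i := fun i => by
    rw [sub_dotProduct, smul_dotProduct, smul_eq_mul]
  have hneg : ∀ j ∉ cyclicPart V, (ε • w - u) ⬝ᵥ V j < 0 := fun j hj => by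
    rw [hw']
    linarith [hlt j (hpos j hj)]
  refine ⟨ε • w - u, fun h => by simpa [h] using hneg j₀ hj₀, fun i hi => ?_⟩
  rw [mem_filter] at hi ⊢
  have hiT : i ∈ cyclicPart V := by
    by_contra h
    exact (hneg i h).not_ge hi.2
  rw [hw', hzero i hiT, sub_zero] at hi
  exact ⟨hiT, (mul_nonneg_iff_of_pos_left hε).1 hi.2⟩

end Coordinates

theorem stmt_13_general (r n : ℕ) (V : Fin n → (Fin r → ℝ)) :
    ∃ T : Finset (Fin n),
      (∀ w : Fin r → ℝ, (∃ i ∈ T, ∑ k, w k * V i k ≠ 0) →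
        ∃ i ∈ T, 0 < ∑ k, w k * V i k) ∧
      (∀ m : ℕ,
        (∀ w : Fin r → ℝ, w ≠ 0 →
          m ≤ (T.filter (fun i => 0 ≤ ∑ k, w k * V i k)).card) ↔
        (∀ w : Fin r → ℝ, w ≠ 0 →
          m ≤ (Finset.univ.filter (fun i => 0 ≤ ∑ k, w k * V i k)).card)) := by
  refine ⟨cyclicPart V, fun w => exists_pos_of_exists_ne_zero_cyclicPart V (dotProductBilin ℝ ℝ w),
    fun m => ⟨fun h w hw => ?_, fun h w hw => ?_⟩⟩
  · exact (h w hw).trans (card_le_card (filter_subset_filter _ (subset_univ _)))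
  · obtain ⟨w', hw', hsub⟩ := exists_ne_zero_filter_subset_cyclicPart V hw
    exact (h w' hw').trans (card_le_card hsub)

/-- Any vector configuration `V` in `ℝ^r` with dual codegree at least `1` contains a
totally cyclic subconfiguration `W ⊆ V` (every linear hyperplane of `lin(W)` has a vector
of `W` on its open positive side) whose dual codegree equals that of `V` (expressed by:
for every `m`, `codeg*(W) ≥ m` iff `codeg*(V) ≥ m`). -/
theorem stmt_13 (r n : ℕ) (V : Fin n → (Fin r → ℝ))
    (hcodeg : ∀ w : Fin r → ℝ, w ≠ 0 →
      1 ≤ (Finset.univ.filter (fun i => 0 ≤ ∑ k, w k * V i k)).card) :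
    ∃ T : Finset (Fin n),
      (∀ w : Fin r → ℝ, (∃ i ∈ T, ∑ k, w k * V i k ≠ 0) →
        ∃ i ∈ T, 0 < ∑ k, w k * V i k) ∧
      (∀ m : ℕ,
        (∀ w : Fin r → ℝ, w ≠ 0 →
          m ≤ (T.filter (fun i => 0 ≤ ∑ k, w k * V i k)).card) ↔
        (∀ w : Fin r → ℝ, w ≠ 0 →
          m ≤ (Finset.univ.filter (fun i => 0 ≤ ∑ k, w k * V i k)).card)) :=
  stmt_13_general r n V
end

section
/- If V is a pure vector configuration of rank r ≥ 1, then its dual degree is at least 1. -/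
/-!
Choose a basis `V k` (`k ∈ s`, `|s| = r`) among the vectors of the configuration and fix
`k₀ ∈ s`. The coordinate functional of `k₀` vanishes on the other `r - 1` basis vectors, so by
purity it or its negative, `φ`, is positive on at least two vectors of `V`, none of which is one
of those basis vectors. Tilting `φ` by the sum `g` of all coordinate functionals, `N • φ + g` is
positive, for `N` large, on these two vectors and on the `r - 1` basis vectors, where `φ = 0`
and `g = 1`.
-/

open Finset Module Filter

variable {𝕜 E ι : Type*} [Field 𝕜] [AddCommGroup E] [Module 𝕜 E]

theorem exists_basis_restrict_of_span_eq_top {V : ι → E}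
    (hspan : Submodule.span 𝕜 (Set.range V) = ⊤) :
    ∃ (s : Set ι) (b : Basis s 𝕜 E), ∀ i, b i = V i := by
  obtain ⟨s, -, -, hsub, hli⟩ :=
    exists_linearIndepOn_extension (linearIndepOn_empty 𝕜 V) (Set.empty_subset Set.univ)
  have hsp : ⊤ ≤ Submodule.span 𝕜 (Set.range fun i : s => V i) := by
    rw [← hspan, ← Set.image_eq_range, Submodule.span_le, ← Set.image_univ]
    exact hsub
  exact ⟨s, Basis.mk hli.linearIndependent hsp, Basis.mk_apply _ hsp⟩

variable [LinearOrder 𝕜] [IsStrictOrderedRing 𝕜]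

theorem Module.Dual.exists_smul_add_pos {φ g : Dual 𝕜 E} {x : ι → E} (s : Finset ι)
    (h : ∀ i ∈ s, 0 < φ (x i) ∨ φ (x i) = 0 ∧ 0 < g (x i)) :
    ∃ N : 𝕜, ∀ i ∈ s, 0 < (N • φ + g) (x i) := by
  refine ((eventually_all_finset s).2 fun i hi => ?_).exists (f := atTop)
  simp only [LinearMap.add_apply, LinearMap.smul_apply, smul_eq_mul]
  rcases h i hi with hφ | ⟨hφ, hg⟩
  · exact (tendsto_atTop_add_const_right _ _
      (tendsto_id.atTop_mul_const hφ)).eventually_gt_atTop 0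
  · exact .of_forall fun N => by simpa [hφ] using hg

variable [Fintype ι]

theorem Module.Dual.exists_card_pos_add_card_le {V : ι → E} (φ g : Dual 𝕜 E) (T : Finset ι)
    (hφ : ∀ i ∈ T, φ (V i) = 0) (hg : ∀ i ∈ T, 0 < g (V i)) :
    ∃ N : 𝕜, #{i | 0 < φ (V i)} + #T ≤ #{i | 0 < (N • φ + g) (V i)} := by
  classical
  have hdisj : Disjoint (α := Finset ι) {i | 0 < φ (V i)} T :=
    disjoint_left.2 fun i hi hiT => by
      rw [mem_filter, hφ i hiT] at hi
      exact lt_irrefl 0 hi.2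
  obtain ⟨N, hN⟩ := Module.Dual.exists_smul_add_pos (φ := φ) (g := g) (x := V)
    (({i | 0 < φ (V i)} : Finset ι) ∪ T) fun i hi => by
      rcases mem_union.1 hi with hi | hi
      · exact .inl (mem_filter.1 hi).2
      · exact .inr ⟨hφ i hi, hg i hi⟩
  refine ⟨N, ?_⟩
  rw [← card_union_of_disjoint hdisj]
  exact card_le_card fun i hi => mem_filter.2 ⟨mem_univ i, hN i hi⟩

theorem exists_dual_finrank_add_one_le_card_pos [Nontrivial E] {V : ι → E}
    (hspan : Submodule.span 𝕜 (Set.range V) = ⊤)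
    (hpure : ∀ φ : Dual 𝕜 E, φ ≠ 0 → 2 ≤ #{i | 0 < φ (V i)} ∨ 2 ≤ #{i | φ (V i) < 0}) :
    ∃ ψ : Dual 𝕜 E, ψ ≠ 0 ∧ finrank 𝕜 E + 1 ≤ #{i | 0 < ψ (V i)} := by
  classical
  obtain ⟨s, b, hb⟩ := exists_basis_restrict_of_span_eq_top hspan
  obtain ⟨k₀⟩ : Nonempty s := b.index_nonempty
  have hcoord (k : s) : b.coord k₀ (V k) = if k = k₀ then 1 else 0 := by
    rw [← hb, Basis.coord_apply, Basis.repr_self, Finsupp.single_apply]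
  have hsum (k : s) : b.sumCoords (V k) = 1 := by
    rw [← hb, Basis.sumCoords_self_apply]
  obtain ⟨φ, hφ, hφ2⟩ : ∃ φ : Dual 𝕜 E, (∀ k ≠ k₀, φ (V k) = 0) ∧ 2 ≤ #{i | 0 < φ (V i)} := by
    have hne : b.coord k₀ ≠ 0 := fun h => by simpa [h] using hcoord k₀
    rcases hpure _ hne with h | h
    · exact ⟨_, fun k hk => by simp [hcoord, hk], h⟩
    · exact ⟨-b.coord k₀, fun k hk => by simp [hcoord, hk], by simpa using h⟩
  let T := (univ.erase k₀).map (Function.Embedding.subtype _)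
  obtain ⟨N, hN⟩ := Module.Dual.exists_card_pos_add_card_le (V := V) φ b.sumCoords T
    (fun i hi => by
      obtain ⟨k, hk, rfl⟩ := mem_map.1 hi
      exact hφ k (ne_of_mem_erase hk))
    (fun i hi => by
      obtain ⟨k, -, rfl⟩ := mem_map.1 hi
      rw [Function.Embedding.subtype_apply, hsum]
      exact one_pos)
  have := Module.Finite.of_basis b
  have hT : #T = finrank 𝕜 E - 1 := by
    simp [T, finrank_eq_card_basis b]
  refine ⟨N • φ + b.sumCoords, ?_, ?_⟩
  · intro h
    simp only [h, LinearMap.zero_apply, lt_irrefl, filter_false, card_empty] at hN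
    omega
  · have := finrank_pos (R := 𝕜) (M := E)
    omega

theorem sum_dotProductEquiv_symm_mul {R n : Type*} [CommSemiring R] [Fintype n] [DecidableEq n]
    (φ : Dual R (n → R)) (x : n → R) :
    ∑ k, (dotProductEquiv R n).symm φ k * x k = φ x :=
  LinearMap.congr_fun ((dotProductEquiv R n).apply_symm_apply φ) x

/-- If `V` is a pure vector configuration spanning `ℝ^r` with `r ≥ 1`, then its dual degree
is at least `1`: some open halfspace bounded by a linear hyperplane contains at least
`r + 1` elements of `V`. -/
theorem stmt_14 (r n : ℕ) (hr : 1 ≤ r) (V : Fin n → (Fin r → ℝ))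
    (hspan : Submodule.span ℝ (Set.range V) = ⊤)
    (hpure : ∀ w : Fin r → ℝ, w ≠ 0 →
      2 ≤ (Finset.univ.filter (fun i => 0 < ∑ k, w k * V i k)).card ∨
      2 ≤ (Finset.univ.filter (fun i => ∑ k, w k * V i k < 0)).card) :
    ∃ w : Fin r → ℝ, w ≠ 0 ∧
      r + 1 ≤ (Finset.univ.filter (fun i => 0 < ∑ k, w k * V i k)).card := by
  have : Nonempty (Fin r) := ⟨⟨0, hr⟩⟩
  obtain ⟨ψ, hψ, hcard⟩ := exists_dual_finrank_add_one_le_card_pos hspan fun φ hφ => by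
    simpa only [sum_dotProductEquiv_symm_mul] using
      hpure ((dotProductEquiv ℝ (Fin r)).symm φ) (by simpa using hφ)
  refine ⟨(dotProductEquiv ℝ (Fin r)).symm ψ, by simpa using hψ, ?_⟩
  simpa only [sum_dotProductEquiv_symm_mul, finrank_fin_fun] using hcard
end

section
/- Let V be a pure vector configuration of rank r with dual degree 1. If C is a circuit of V with both C^+ and C^- nonempty, then |C| = r+1. -/
/-!
Since the signs of the circuit `C` are mixed, some functional `f` is positive on all of `C`, so
`|C| ≤ |f⁺| ≤ r + 1`. For a functional `φ` vanishing on `C`, the perturbation `φ + ε f` keeps the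
positive side of `φ` and gains `C`, hence `|φ⁺| + |C| ≤ r + 1`.

Suppose `|C| ≤ r` and, among the functionals vanishing on `C`, let `φ` have the largest positive
side `P`. Removing one point from `C` leaves at most `r - |P|` vectors, which together with those
of `P` either do not span, giving a nonzero `u` vanishing on `C` and on `P`, or form a basis, whose
coordinate functional at a point of `P` is a nonzero `u` vanishing on `C` and on the rest of `P`.
Perturbing `±u` by `ε φ` and using the maximality of `P` shows that `u⁺` and `u⁻` have at most one
element each, contradicting purity.
-/

open Finset Module Filter Topology

section LinearAlgebra

variable {ι K E : Type*} [Field K] [AddCommGroup E] [Module K E] {V : ι → E}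

theorem LinearIndepOn.exists_dual_apply_eq {s : Set ι} (hli : LinearIndepOn K V s) (t : ι → K) :
    ∃ φ : Dual K E, ∀ i ∈ s, φ (V i) = t i := by
  have hli' : LinearIndependent K fun i : s => V i := hli
  obtain ⟨φ, hφ⟩ := LinearMap.exists_extend ((Basis.span hli').constr K fun i => t i)
  refine ⟨φ, fun i hi => ?_⟩
  have := LinearMap.congr_fun hφ (Basis.span hli' ⟨i, hi⟩)
  rwa [LinearMap.comp_apply, Basis.constr_basis, Submodule.subtype_apply,
    Basis.coe_span_apply] at this

theorem Submodule.mem_dualAnnihilator_span_image {s : Set ι} {φ : Dual K E} :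
    φ ∈ (Submodule.span K (V '' s)).dualAnnihilator ↔ ∀ i ∈ s, φ (V i) = 0 := by
  rw [← SetLike.mem_coe, Submodule.coe_dualAnnihilator_span, Set.mem_ofPred_eq,
    Set.image_subset_iff]
  rfl

theorem linearIndepOn_erase_of_minimal [Fintype ι] [DecidableEq ι] {C : Finset ι} {i₀ : ι}
    (hmin : ∀ m : ι → K, ∑ i, m i • V i = 0 → (∀ i, m i ≠ 0 → i ∈ C) →
      m = 0 ∨ ∀ i ∈ C, m i ≠ 0)
    (hi₀ : i₀ ∈ C) : LinearIndepOn K V ↑(C.erase i₀) := by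
  rw [linearIndepOn_finset_iff]
  intro g hg i hi
  let m : ι → K := fun j => if j ∈ C.erase i₀ then g j else 0
  have hm : ∑ j, m j • V j = 0 := by
    simp only [m, ite_smul, zero_smul]
    rwa [Finset.sum_ite_mem, Finset.univ_inter]
  rcases hmin m hm (fun j hj => mem_of_mem_erase (by_contra fun h => hj (if_neg h))) with h | h
  · simpa only [m, if_pos hi, Pi.zero_apply] using congr_fun h i
  · exact absurd (by simp [m]) (h i₀ hi₀)

theorem sum_mul_apply_eq_zero_of_sum_smul_eq_zero {C : Finset ι} {l : ι → K}
    (hdep : ∑ i ∈ C, l i • V i = 0) (φ : Dual K E) : ∑ i ∈ C, l i * φ (V i) = 0 := by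
  simpa using congr_arg φ hdep

theorem apply_eq_zero_of_forall_mem_erase [DecidableEq ι] {C : Finset ι} {l : ι → K} {i₀ : ι}
    (hdep : ∑ i ∈ C, l i • V i = 0) (hi₀ : i₀ ∈ C) (hl : l i₀ ≠ 0) {φ : Dual K E}
    (hφ : ∀ j ∈ C.erase i₀, φ (V j) = 0) : ∀ i ∈ C, φ (V i) = 0 := by
  have h₀ : φ (V i₀) = 0 := by
    have := sum_mul_apply_eq_zero_of_sum_smul_eq_zero hdep φ
    rw [← add_sum_erase _ _ hi₀, sum_eq_zero fun j hj => by rw [hφ j hj, mul_zero],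
      add_zero] at this
    exact (mul_eq_zero.1 this).resolve_left hl
  intro i hi
  rcases eq_or_ne i i₀ with rfl | h
  · exact h₀
  · exact hφ i (mem_erase.2 ⟨h, hi⟩)

theorem finrank_le_card_of_span_eq_top {D : Finset ι}
    (h : Submodule.span K (V '' D) = ⊤) : finrank K E ≤ #D := by
  classical
  have := finrank_span_finset_le_card (R := K) (D.image V)
  rw [Set.finrank, coe_image, h, finrank_top] at this
  exact this.trans card_image_le

theorem linearIndepOn_of_span_eq_top {D : Finset ι} (h : Submodule.span K (V '' D) = ⊤)
    (hD : #D ≤ finrank K E) : LinearIndepOn K V D :=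
  linearIndependent_of_top_le_span_of_card_eq_finrank (by rw [← Set.image_eq_range, h])
    (by simpa using hD.antisymm (finrank_le_card_of_span_eq_top h))

theorem exists_dual_ne_zero_of_card_union_le [DecidableEq ι] {B P : Finset ι}
    (hB : #B < finrank K E) (hBP : #(B ∪ P) ≤ finrank K E) :
    ∃ u : Dual K E, u ≠ 0 ∧ (∀ i ∈ B, u (V i) = 0) ∧ {i | i ∈ P ∧ u (V i) ≠ 0}.Subsingleton := by
  by_cases hspan : Submodule.span K (V '' ↑(B ∪ P)) = ⊤
  · have hd := finrank_le_card_of_span_eq_top hspan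
    obtain ⟨i₁, hi₁P, hi₁B⟩ : ∃ i ∈ P, i ∉ B := by
      by_contra! h
      rw [union_eq_left.2 h] at hd
      omega
    obtain ⟨u, hu⟩ := (linearIndepOn_of_span_eq_top hspan hBP).exists_dual_apply_eq
      (Pi.single i₁ 1)
    have hu₀ : ∀ i ∈ B ∪ P, i ≠ i₁ → u (V i) = 0 := fun i hi h => by
      rw [hu i hi, Pi.single_eq_of_ne h]
    refine ⟨u, fun h => ?_,
      fun i hi => hu₀ i (mem_union_left _ hi) (ne_of_mem_of_not_mem hi hi₁B),
      (Set.subsingleton_singleton (a := i₁)).anti fun i ⟨hiP, hi⟩ => ?_⟩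
    · simpa [h] using hu i₁ (mem_union_right _ hi₁P)
    · by_contra h
      exact hi (hu₀ i (mem_union_right _ hiP) h)
  · obtain ⟨u, hu₀, hle⟩ := (Submodule.span K (V '' ↑(B ∪ P))).exists_le_ker_of_lt_top
      (lt_top_iff_ne_top.2 hspan)
    have hu : ∀ i ∈ B ∪ P, u (V i) = 0 := fun i hi => hle (Submodule.subset_span ⟨i, hi, rfl⟩)
    exact ⟨u, hu₀, fun i hi => hu i (mem_union_left _ hi),
      Set.subsingleton_empty.anti fun i ⟨hiP, hi⟩ => hi (hu i (mem_union_right _ hiP))⟩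

end LinearAlgebra

theorem eventually_forall_pos_add_mul {ι : Type*} [Finite ι] (a b : ι → ℝ) :
    ∀ᶠ ε in 𝓝[>] (0 : ℝ), ∀ i, 0 < a i ∨ 0 < b i ∧ a i = 0 → 0 < a i + ε * b i := by
  refine eventually_all.2 fun i => ?_
  by_cases ha : 0 < a i
  · have hlim : Tendsto (fun ε => a i + ε * b i) (𝓝[>] 0) (𝓝 (a i)) :=
      ((by fun_prop : Continuous fun ε => a i + ε * b i).tendsto' 0 (a i) (by simp)).mono_left
        nhdsWithin_le_nhds
    exact (hlim.eventually (lt_mem_nhds ha)).mono fun ε h _ => h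
  · filter_upwards [self_mem_nhdsWithin] with ε (hε : 0 < ε)
    rintro (h | ⟨hb, h⟩)
    · exact absurd h ha
    · simpa [h] using mul_pos hε hb

section PositiveSide

variable {ι E : Type*} [Fintype ι] [AddCommGroup E] [Module ℝ E]

/-- The indices of `V` in the open half-space `h⁺` of the hyperplane `h = ker φ`; the opposite
half-space is `posSide V (-φ)`. -/
noncomputable def posSide (V : ι → E) (φ : Dual ℝ E) : Finset ι := {i | 0 < φ (V i)}

variable {V : ι → E}

@[simp]
theorem mem_posSide {φ : Dual ℝ E} {i : ι} : i ∈ posSide V φ ↔ 0 < φ (V i) := by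
  simp [posSide]

theorem card_posSide_add_card_le (W : Submodule ℝ (Dual ℝ E)) {N : ℕ}
    (hN : ∀ χ ∈ W, #(posSide V χ) ≤ N) {φ ψ : Dual ℝ E} (hφ : φ ∈ W) (hψ : ψ ∈ W) :
    #(posSide V φ) + #{i ∈ posSide V ψ | φ (V i) = 0} ≤ N := by
  classical
  obtain ⟨ε, hε⟩ := (eventually_forall_pos_add_mul (φ <| V ·) (ψ <| V ·)).exists
  have hsub : posSide V φ ∪ {i ∈ posSide V ψ | φ (V i) = 0} ⊆ posSide V (φ + ε • ψ) :=
    fun i hi => by simpa using hε i (by simpa using hi)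
  have hdisj : Disjoint (posSide V φ) {i ∈ posSide V ψ | φ (V i) = 0} :=
    disjoint_left.2 fun i hi hi' => (mem_posSide.1 hi).ne' (mem_filter.1 hi').2
  calc _ = #(posSide V φ ∪ {i ∈ posSide V ψ | φ (V i) = 0}) :=
        (card_union_of_disjoint hdisj).symm
    _ ≤ #(posSide V (φ + ε • ψ)) := card_le_card hsub
    _ ≤ N := hN _ (W.add_mem hφ (W.smul_mem ε hψ))

theorem exists_forall_card_posSide_le (W : Submodule ℝ (Dual ℝ E)) :
    ∃ φ ∈ W, ∀ χ ∈ W, #(posSide V χ) ≤ #(posSide V φ) := by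
  obtain ⟨_, ⟨φ, hφ, rfl⟩, hmax⟩ :=
    Set.exists_max_image (posSide V '' W) card (Set.toFinite _) ⟨_, 0, W.zero_mem, rfl⟩
  exact ⟨φ, hφ, fun χ hχ => hmax _ ⟨χ, hχ, rfl⟩⟩

theorem card_posSide_le_one_of_forall_le {W : Submodule ℝ (Dual ℝ E)} {φ u : Dual ℝ E}
    (hφ : φ ∈ W) (hmax : ∀ χ ∈ W, #(posSide V χ) ≤ #(posSide V φ)) (hu : u ∈ W)
    (hP : {i | i ∈ posSide V φ ∧ u (V i) ≠ 0}.Subsingleton) :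
    #(posSide V u) ≤ 1 ∧ #(posSide V (-u)) ≤ 1 := by
  have hsplit := card_filter_add_card_filter_not (s := posSide V φ) (fun i => u (V i) = 0)
  have hone : #{i ∈ posSide V φ | ¬u (V i) = 0} ≤ 1 :=
    card_le_one.2 fun a ha b hb => hP (by simpa using ha) (by simpa using hb)
  have h₁ := card_posSide_add_card_le W hmax hu hφ
  have h₂ := card_posSide_add_card_le W hmax (W.neg_mem hu) hφ
  simp only [LinearMap.neg_apply, neg_eq_zero] at h₂
  omega

theorem exists_forall_pos_of_circuit [DecidableEq ι] {C : Finset ι} {l : ι → ℝ} {i₀ : ι}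
    (hdep : ∑ i ∈ C, l i • V i = 0) (hli : LinearIndepOn ℝ V ↑(C.erase i₀)) (hi₀ : i₀ ∈ C)
    (hpos : 0 < l i₀) (hneg : ∃ i ∈ C, l i < 0) : ∃ f : Dual ℝ E, ∀ i ∈ C, 0 < f (V i) := by
  obtain ⟨j, hjC, hj⟩ := hneg
  have hjB : j ∈ C.erase i₀ := mem_erase.2 ⟨by rintro rfl; linarith, hjC⟩
  obtain ⟨f₀, hf₀⟩ := hli.exists_dual_apply_eq (Pi.single j 1)
  obtain ⟨f₁, hf₁⟩ := hli.exists_dual_apply_eq 1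
  have h₀ : 0 < f₀ (V i₀) := by
    have := sum_mul_apply_eq_zero_of_sum_smul_eq_zero hdep f₀
    rw [← add_sum_erase _ _ hi₀, sum_eq_single_of_mem j hjB fun k hk hkj => by
      rw [hf₀ k hk, Pi.single_eq_of_ne hkj, mul_zero], hf₀ j hjB, Pi.single_eq_same,
      mul_one] at this
    exact pos_of_mul_pos_right (by linarith : 0 < l i₀ * f₀ (V i₀)) hpos.le
  obtain ⟨ε, hε⟩ := (eventually_forall_pos_add_mul (f₀ <| V ·) (f₁ <| V ·)).exists
  refine ⟨f₀ + ε • f₁, fun i hi => ?_⟩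
  simp only [LinearMap.add_apply, LinearMap.smul_apply, smul_eq_mul]
  refine hε i ?_
  rcases eq_or_ne i i₀ with rfl | hi₀'
  · exact Or.inl h₀
  have hiB : i ∈ C.erase i₀ := mem_erase.2 ⟨hi₀', hi⟩
  rcases eq_or_ne i j with rfl | hij
  · exact Or.inl (by simp [hf₀ i hiB])
  · exact Or.inr (by simp [hf₀ i hiB, hf₁ i hiB, hij])

theorem finrank_lt_card_of_circuit [DecidableEq ι]
    (hpure : ∀ φ : Dual ℝ E, φ ≠ 0 → 2 ≤ #(posSide V φ) ∨ 2 ≤ #(posSide V (-φ)))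
    (hdeg : ∀ φ : Dual ℝ E, #(posSide V φ) ≤ finrank ℝ E + 1)
    {C : Finset ι} {l : ι → ℝ} {i₀ : ι} (hdep : ∑ i ∈ C, l i • V i = 0) (hi₀ : i₀ ∈ C)
    (hl : l i₀ ≠ 0) {f : Dual ℝ E} (hf : ∀ i ∈ C, 0 < f (V i)) : finrank ℝ E < #C := by
  by_contra! hC
  set W := (Submodule.span ℝ (V '' C)).dualAnnihilator
  obtain ⟨φ, hφ, hmax⟩ := exists_forall_card_posSide_le (V := V) W
  have hφC : ∀ i ∈ C, φ (V i) = 0 := Submodule.mem_dualAnnihilator_span_image.1 hφ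
  have hPC : #(posSide V φ) + #C ≤ finrank ℝ E + 1 := by
    have hsub : C ⊆ {i ∈ posSide V f | φ (V i) = 0} := fun i hi => by simp [hf i hi, hφC i hi]
    have := card_posSide_add_card_le ⊤ (fun χ _ => hdeg χ) (Submodule.mem_top (x := φ))
      (Submodule.mem_top (x := f))
    have := card_le_card hsub
    omega
  have hB : #(C.erase i₀) + 1 = #C := card_erase_add_one hi₀
  obtain ⟨u, hu₀, huB, huP⟩ := exists_dual_ne_zero_of_card_union_le (K := ℝ) (V := V)
    (B := C.erase i₀) (P := posSide V φ) (by omega) ((card_union_le _ _).trans (by omega))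
  have huW : u ∈ W := Submodule.mem_dualAnnihilator_span_image.2
    (apply_eq_zero_of_forall_mem_erase hdep hi₀ hl huB)
  obtain ⟨h₁, h₂⟩ := card_posSide_le_one_of_forall_le hφ hmax huW huP
  rcases hpure u hu₀ with h | h <;> omega

theorem card_eq_finrank_add_one_of_circuit [DecidableEq ι]
    (hpure : ∀ φ : Dual ℝ E, φ ≠ 0 → 2 ≤ #(posSide V φ) ∨ 2 ≤ #(posSide V (-φ)))
    (hdeg : ∀ φ : Dual ℝ E, #(posSide V φ) ≤ finrank ℝ E + 1)
    {C : Finset ι} {l : ι → ℝ} (hdep : ∑ i ∈ C, l i • V i = 0)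
    (hli : ∀ i ∈ C, LinearIndepOn ℝ V ↑(C.erase i))
    (hpos : ∃ i ∈ C, 0 < l i) (hneg : ∃ i ∈ C, l i < 0) : #C = finrank ℝ E + 1 := by
  obtain ⟨i₀, hi₀, hl⟩ := hpos
  obtain ⟨f, hf⟩ := exists_forall_pos_of_circuit hdep (hli i₀ hi₀) hi₀ hl hneg
  have hle : #C ≤ finrank ℝ E + 1 :=
    (card_le_card fun i hi => mem_posSide.2 (hf i hi)).trans (hdeg f)
  have hlt := finrank_lt_card_of_circuit hpure hdeg hdep hi₀ hl.ne' hf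
  omega

end PositiveSide

theorem stmt_15_general (r n : ℕ) (V : Fin n → (Fin r → ℝ))
    (hpure : ∀ w : Fin r → ℝ, w ≠ 0 →
      2 ≤ (Finset.univ.filter (fun i => 0 < ∑ k, w k * V i k)).card ∨
      2 ≤ (Finset.univ.filter (fun i => ∑ k, w k * V i k < 0)).card)
    (hdeg1 : ∀ w : Fin r → ℝ,
      (Finset.univ.filter (fun i => 0 < ∑ k, w k * V i k)).card ≤ r + 1)
    (C : Finset (Fin n)) (l : Fin n → ℝ)
    (hsupp : ∀ i, l i ≠ 0 ↔ i ∈ C)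
    (hdep : ∑ i, l i • V i = 0)
    (hmin : ∀ m : Fin n → ℝ, (∑ i, m i • V i = 0) → (∀ i, m i ≠ 0 → i ∈ C) →
      (m = 0 ∨ ∀ i ∈ C, m i ≠ 0))
    (hCpos : ∃ i ∈ C, 0 < l i) (hCneg : ∃ i ∈ C, l i < 0) :
    C.card = r + 1 := by
  let e := dotProductEquiv ℝ (Fin r)
  have hside (w : Fin r → ℝ) :
      posSide V (e w) = Finset.univ.filter (fun i => 0 < ∑ k, w k * V i k) ∧
      posSide V (-e w) = Finset.univ.filter (fun i => ∑ k, w k * V i k < 0) := by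
    constructor <;> ext i <;> simp [e, dotProduct]
  have hdepC : ∑ i ∈ C, l i • V i = 0 := by
    rw [← hdep]
    exact sum_subset (subset_univ C) fun i _ hi => by
      rw [not_not.1 (mt (hsupp i).1 hi), zero_smul]
  have := card_eq_finrank_add_one_of_circuit (V := V) (fun φ hφ => ?_) (fun φ => ?_) hdepC
    (fun i hi => linearIndepOn_erase_of_minimal hmin hi) hCpos hCneg
  · rwa [finrank_fin_fun] at this
  · obtain ⟨w, rfl⟩ := e.surjective φ
    rw [(hside w).1, (hside w).2]
    exact hpure w (by rintro rfl; simp at hφ)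
  · obtain ⟨w, rfl⟩ := e.surjective φ
    rw [(hside w).1, finrank_fin_fun]
    exact hdeg1 w

/-- Let `V` be a pure vector configuration spanning `ℝ^r` with dual degree `1`. If `C` is a
circuit of `V` (support of an inclusion-minimal nonzero linear dependence) with both
positive and negative part nonempty, then `|C| = r + 1`. -/
theorem stmt_15 (r n : ℕ) (V : Fin n → (Fin r → ℝ))
    (hspan : Submodule.span ℝ (Set.range V) = ⊤)
    (hpure : ∀ w : Fin r → ℝ, w ≠ 0 →
      2 ≤ (Finset.univ.filter (fun i => 0 < ∑ k, w k * V i k)).card ∨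
      2 ≤ (Finset.univ.filter (fun i => ∑ k, w k * V i k < 0)).card)
    (hdeg1 : ∀ w : Fin r → ℝ,
      (Finset.univ.filter (fun i => 0 < ∑ k, w k * V i k)).card ≤ r + 1)
    (hdeg2 : ∃ w : Fin r → ℝ, w ≠ 0 ∧
      (Finset.univ.filter (fun i => 0 < ∑ k, w k * V i k)).card = r + 1)
    (C : Finset (Fin n)) (l : Fin n → ℝ)
    (hsupp : ∀ i, l i ≠ 0 ↔ i ∈ C)
    (hdep : ∑ i, l i • V i = 0)
    (hmin : ∀ m : Fin n → ℝ, (∑ i, m i • V i = 0) → (∀ i, m i ≠ 0 → i ∈ C) →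
      (m = 0 ∨ ∀ i ∈ C, m i ≠ 0))
    (hCpos : ∃ i ∈ C, 0 < l i) (hCneg : ∃ i ∈ C, l i < 0) :
    C.card = r + 1 :=
  stmt_15_general r n V hpure hdeg1 C l hsupp hdep hmin hCpos hCneg
end

section
/- If V is a pure vector configuration of rank r ≥ 2 and dual degree 1, then V has no repeated nonzero vectors. -/
/-!
If the functionals `w ↦ ⟪w, V k⟫` are pure and jointly nondegenerate on a space of dimension
`d + 1`, some `w` is positive on at least `d + 2` of them. By induction on `d`: pick `k` with
`V k` not orthogonal to the space, take `w` in the hyperplane `(V k)⟂` positive on `d + 1` of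
them, and tilt it slightly out of the hyperplane towards `V k`; small tilts keep every strict
inequality and make `k` positive as well.

If `V i = V j ≠ 0` with `i ≠ j`, apply this inside `(V i)⟂`, of dimension `r - 1`, to get `w`
with `r` positive vectors, and tilt towards `V i`: now `i` and `j` both become positive, so
`r + 2` vectors lie in an open half-space, contradicting `deg* V ≤ 1`.
-/

open Finset Filter Topology Module

namespace VectorConfiguration

variable {ι E : Type*} [Fintype ι] [AddCommGroup E] [Module ℝ E]

/-- The paper's `h⁺ ∩ V` for the hyperplane `h` with normal `w`, the vectors of `V` being encoded
as the functionals `φ i = ⟪·, V i⟫`. -/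
noncomputable def posSet (φ : ι → Dual ℝ E) (w : E) : Finset ι :=
  univ.filter fun i => 0 < φ i w

def IsPure (φ : ι → Dual ℝ E) : Prop :=
  ∀ w : E, w ≠ 0 → 2 ≤ #(posSet φ w) ∨ 2 ≤ #(posSet φ (-w))

lemma posSet_neg (φ : ι → Dual ℝ E) (w : E) :
    posSet φ (-w) = univ.filter fun i => φ i w < 0 := by
  simp [posSet]

lemma IsPure.comp_subtype {φ : ι → Dual ℝ E} (hφ : IsPure φ) (p : Submodule ℝ E) :
    IsPure fun i => (φ i).comp p.subtype := fun w hw =>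
  hφ w (by simpa using hw)

lemma posSet_comp_subtype (φ : ι → Dual ℝ E) (p : Submodule ℝ E) (w : p) :
    posSet (fun i => (φ i).comp p.subtype) w = posSet φ w :=
  rfl

lemma eventually_posSet_subset_posSet_add_smul (φ : ι → Dual ℝ E) (w u : E) :
    ∀ᶠ ε in 𝓝 (0 : ℝ), posSet φ w ⊆ posSet φ (w + ε • u) := by
  have hcont : ∀ i, Filter.Tendsto (fun ε : ℝ => φ i (w + ε • u)) (𝓝 0) (𝓝 (φ i w)) := by
    intro i
    have : Continuous fun ε : ℝ => φ i w + ε * φ i u := by fun_prop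
    simpa using this.tendsto 0
  have : ∀ᶠ ε in 𝓝 (0 : ℝ), ∀ i, 0 < φ i w → 0 < φ i (w + ε • u) :=
    eventually_all.mpr fun i => by
      by_cases h : 0 < φ i w
      · exact (hcont i).eventually (lt_mem_nhds h) |>.mono fun _ h' _ => h'
      · exact Eventually.of_forall fun _ h' => absurd h' h
  exact this.mono fun ε h i hi => by
    simp only [posSet, mem_filter, mem_univ, true_and] at hi ⊢
    exact h i hi

lemma exists_card_posSet_add_card_le (φ : ι → Dual ℝ E) (w u : E) (S : Finset ι)
    (hS : ∀ i ∈ S, φ i w = 0 ∧ 0 < φ i u) :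
    ∃ ε : ℝ, #(posSet φ w) + #S ≤ #(posSet φ (w + ε • u)) := by
  classical
  obtain ⟨ε, hsub, hε⟩ :=
    ((eventually_posSet_subset_posSet_add_smul φ w u).filter_mono nhdsWithin_le_nhds |>.and
      self_mem_nhdsWithin).exists (f := 𝓝[>] (0 : ℝ))
  refine ⟨ε, ?_⟩
  have hdisj : Disjoint (posSet φ w) S := by
    rw [Finset.disjoint_right]
    intro i hi hpos
    simp [posSet, (hS i hi).1] at hpos
  have hS_sub : S ⊆ posSet φ (w + ε • u) := fun i hi => by
    simp [posSet, (hS i hi).1, mul_pos hε (hS i hi).2]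
  rw [← card_union_of_disjoint hdisj]
  exact card_le_card (union_subset hsub hS_sub)

lemma exists_pos_of_ne_zero {f : Dual ℝ E} (hf : f ≠ 0) : ∃ u, 0 < f u := by
  obtain ⟨u, hu⟩ := LinearMap.surjective hf 1
  exact ⟨u, by simp [hu]⟩

lemma exists_card_posSet_ge {φ : ι → Dual ℝ E} (hφ : IsPure φ)
    (hnd : ∀ w, (∀ i, φ i w = 0) → w = 0) (d : ℕ) [FiniteDimensional ℝ E]
    (hd : finrank ℝ E = d + 1) : ∃ w, d + 2 ≤ #(posSet φ w) := by
  induction d generalizing E with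
  | zero =>
    obtain ⟨w, hw⟩ := finrank_pos_iff_exists_ne_zero.mp (show 0 < finrank ℝ E by omega)
    rcases hφ w hw with h | h
    · exact ⟨w, h⟩
    · exact ⟨-w, h⟩
  | succ d ih =>
    obtain ⟨w₁, hw₁⟩ := finrank_pos_iff_exists_ne_zero.mp (show 0 < finrank ℝ E by omega)
    obtain ⟨k, hk⟩ : ∃ k, φ k w₁ ≠ 0 := not_forall.mp fun h => hw₁ (hnd w₁ h)
    have hφk : φ k ≠ 0 := fun h => hk (by simp [h])
    obtain ⟨u, hu⟩ := exists_pos_of_ne_zero hφk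
    have hK : finrank ℝ (LinearMap.ker (φ k)) = d + 1 := by
      have := Dual.finrank_ker_add_one_of_ne_zero hφk
      omega
    obtain ⟨w, hw⟩ := ih (hφ.comp_subtype _) (fun w hw => Subtype.ext (hnd w (hw ·))) hK
    obtain ⟨ε, hε⟩ := exists_card_posSet_add_card_le φ w u {k}
      (by simp only [mem_singleton, forall_eq]; exact ⟨w.2, hu⟩)
    rw [posSet_comp_subtype] at hw
    rw [card_singleton] at hε
    exact ⟨w + ε • u, by omega⟩

lemma exists_card_posSet_ge_of_repeated [FiniteDimensional ℝ E] {φ : ι → Dual ℝ E}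
    (hφ : IsPure φ) (hnd : ∀ w, (∀ i, φ i w = 0) → w = 0) (hE : 2 ≤ finrank ℝ E)
    {i j : ι} (hij : i ≠ j) (hrep : φ i = φ j) (hi : φ i ≠ 0) :
    ∃ w, finrank ℝ E + 2 ≤ #(posSet φ w) := by
  classical
  have hK : finrank ℝ (LinearMap.ker (φ i)) = finrank ℝ E - 2 + 1 := by
    have := Dual.finrank_ker_add_one_of_ne_zero hi
    omega
  obtain ⟨w, hw⟩ := exists_card_posSet_ge (hφ.comp_subtype _)
    (fun w hw => Subtype.ext (hnd w (hw ·))) _ hK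
  obtain ⟨u, hu⟩ := exists_pos_of_ne_zero hi
  have hwi : φ i w = 0 := w.2
  obtain ⟨ε, hε⟩ := exists_card_posSet_add_card_le φ w u {i, j}
    (by simp only [mem_insert, mem_singleton, forall_eq_or_imp, forall_eq, ← hrep]
        exact ⟨⟨hwi, hu⟩, hwi, hu⟩)
  rw [posSet_comp_subtype] at hw
  rw [card_pair hij] at hε
  exact ⟨w + ε • u, by omega⟩

end VectorConfiguration

lemma eq_zero_of_forall_dotProduct_eq_zero {κ ι R : Type*} [Fintype ι] [CommRing R]
    [LinearOrder R] [IsStrictOrderedRing R] {V : κ → ι → R}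
    (hspan : Submodule.span R (Set.range V) = ⊤) {w : ι → R} (hw : ∀ k, w ⬝ᵥ V k = 0) :
    w = 0 := by
  have hle : Submodule.span R (Set.range V) ≤ LinearMap.ker (dotProductBilin R R w) :=
    Submodule.span_le.mpr (Set.range_subset_iff.mpr hw)
  rw [hspan] at hle
  exact dotProduct_self_eq_zero.mp (hle Submodule.mem_top)

theorem stmt_16_general (r n : ℕ) (hr : 2 ≤ r) (V : Fin n → (Fin r → ℝ))
    (hspan : Submodule.span ℝ (Set.range V) = ⊤)
    (hpure : ∀ w : Fin r → ℝ, w ≠ 0 →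
      2 ≤ (Finset.univ.filter (fun i => 0 < ∑ k, w k * V i k)).card ∨
      2 ≤ (Finset.univ.filter (fun i => ∑ k, w k * V i k < 0)).card)
    (hdeg1 : ∀ w : Fin r → ℝ,
      (Finset.univ.filter (fun i => 0 < ∑ k, w k * V i k)).card ≤ r + 1) :
    ∀ i j : Fin n, i ≠ j → V i = V j → V i = 0 := by
  intro i j hij hVij
  by_contra hVi
  let φ : Fin n → Module.Dual ℝ (Fin r → ℝ) := fun k => (dotProductBilin ℝ ℝ).flip (V k)
  have hφ : VectorConfiguration.IsPure φ := fun w hw => by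
    rw [VectorConfiguration.posSet_neg]
    exact hpure w hw
  have hφi : φ i ≠ 0 := fun h => hVi (dotProduct_self_eq_zero.mp (LinearMap.congr_fun h (V i)))
  obtain ⟨w, hw⟩ := VectorConfiguration.exists_card_posSet_ge_of_repeated hφ
    (fun _ => eq_zero_of_forall_dotProduct_eq_zero hspan)
    (by simpa using hr) hij (by simp only [φ, hVij]) hφi
  rw [finrank_fin_fun] at hw
  have := hw.trans (hdeg1 w)
  omega

/-- If `V` is a pure vector configuration spanning `ℝ^r` with `r ≥ 2` and dual degree `1`,
then `V` has no repeated nonzero vectors: two distinct elements of the configuration that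
are equal as vectors must both be the zero vector. -/
theorem stmt_16 (r n : ℕ) (hr : 2 ≤ r) (V : Fin n → (Fin r → ℝ))
    (hspan : Submodule.span ℝ (Set.range V) = ⊤)
    (hpure : ∀ w : Fin r → ℝ, w ≠ 0 →
      2 ≤ (Finset.univ.filter (fun i => 0 < ∑ k, w k * V i k)).card ∨
      2 ≤ (Finset.univ.filter (fun i => ∑ k, w k * V i k < 0)).card)
    (hdeg1 : ∀ w : Fin r → ℝ,
      (Finset.univ.filter (fun i => 0 < ∑ k, w k * V i k)).card ≤ r + 1)
    (hdeg2 : ∃ w : Fin r → ℝ, w ≠ 0 ∧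
      (Finset.univ.filter (fun i => 0 < ∑ k, w k * V i k)).card = r + 1) :
    ∀ i j : Fin n, i ≠ j → V i = V j → V i = 0 :=
  stmt_16_general r n hr V hspan hpure hdeg1
end

section
/- Let V be a pure vector configuration of rank r with dual degree 1. If C and D are distinct circuits of V with |C ∪ D| ≤ r+1, then C and D are disjoint. -/
/-!
Let `c` be a circuit of `V` with `c a > 0 > c b` and at most `r` elements. Extend
`supp c \ {b}` to a basis `B ⊆ V` and pick `j ∈ B` outside `supp c`. In the coordinates of `B`,
the vector `v b` has positive `a`-coordinate and zero `j`-coordinate, so a perturbation of the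
`a`-coordinate is positive on the `r` vectors `B \ {j} ∪ {b}`, all of which lie on the
hyperplane `x_j = 0`. Purity puts two vectors strictly on one side of this hyperplane, and
tilting it slightly towards the perturbed functional puts `r + 2` vectors on its positive side,
contradicting dual degree `1`.

Such a circuit exists when two distinct circuits `C`, `D` share an element `i₀`. If neither has
coefficients of both signs, make both nonnegative and eliminate `i₀`: a circuit conformal to the
resulting dependence has coefficients of both signs, since otherwise it would lie strictly
inside `C` or `D`. In every case the circuit lies strictly inside `C ∪ D`, so it has at most `r`
elements.
-/

open Finset Function
open Module (Basis)

section

variable {ι 𝕜 E : Type*} [Field 𝕜] [AddCommGroup E] [Module 𝕜 E] {v : ι → E}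

theorem Module.Basis.coord_apply_self {B : Set ι} (β : Basis B 𝕜 E) (hβ : ∀ k, β k = v k)
    (k : B) : β.coord k (v k) = 1 := by
  rw [← hβ, coord_apply, repr_self, Finsupp.single_eq_same]

theorem Module.Basis.coord_apply_of_ne {B : Set ι} (β : Basis B 𝕜 E) (hβ : ∀ k, β k = v k)
    {j k : B} (hjk : j ≠ k) : β.coord k (v j) = 0 := by
  rw [← hβ, coord_apply, repr_self, Finsupp.single_eq_of_ne hjk.symm]

theorem Module.Dual.exists_eq_sum_mul {r : ℕ} (f : Module.Dual 𝕜 (Fin r → 𝕜)) :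
    ∃ w : Fin r → 𝕜, ∀ x, f x = ∑ k, w k * x k := by
  refine ⟨fun k => f (Pi.single k 1), fun x => ?_⟩
  conv_lhs => rw [← univ_sum_single x, map_sum]
  refine sum_congr rfl fun k _ => ?_
  have := map_smul f (x k) (Pi.single k 1)
  rwa [← Pi.single_smul', smul_eq_mul, mul_one, smul_eq_mul, mul_comm] at this

variable [Fintype ι]

theorem ncard_setOf_eq_card_filter (p : ι → Prop) [DecidablePred p] :
    {i | p i}.ncard = #{i | p i} := by
  rw [← Finset.coe_filter_univ, Set.ncard_coe_finset]

theorem linearIndepOn_iff_sum_smul {s : Set ι} :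
    LinearIndepOn 𝕜 v s ↔ ∀ m : ι → 𝕜, ∑ i, m i • v i = 0 → support m ⊆ s → m = 0 := by
  rw [linearIndepOn_iff]
  refine ⟨fun h m hm hms => ?_, fun h l hl hl0 => ?_⟩
  · have := h (Finsupp.equivFunOnFinite.symm m) (fun i hi => hms (by simpa using hi))
      (by rw [Finsupp.linearCombination_apply, Finsupp.sum_fintype] <;> simp [hm])
    simpa using congrArg (⇑) this
  · have := h l (by rwa [Finsupp.linearCombination_apply, Finsupp.sum_fintype] at hl0; simp)
      (fun i hi => hl (by simpa using hi))
    exact DFunLike.coe_injective this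

theorem Module.Basis.coord_apply_of_sum_smul_eq_zero {B : Set ι} (β : Basis B 𝕜 E)
    (hβ : ∀ k, β k = v k) {c : ι → 𝕜} (hc : ∑ i, c i • v i = 0) {b : ι} (hb : c b ≠ 0)
    (hcB : Function.support c \ {b} ⊆ B) (hbB : b ∉ B) (k : B) :
    β.coord k (v b) = -c k / c b := by
  classical
  have hk : (k : ι) ∈ univ.erase b := mem_erase.2 ⟨fun h => hbB (h ▸ k.2), mem_univ _⟩
  have h := congrArg (β.coord k) hc
  rw [map_sum, map_zero, ← add_sum_erase _ _ (mem_univ b), sum_eq_single_of_mem _ hk] at h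
  · rw [map_smul, map_smul, β.coord_apply_self hβ] at h
    simp only [smul_eq_mul, mul_one] at h
    field_simp
    linear_combination h
  · intro i hi hik
    by_cases hci : c i = 0
    · simp [hci]
    · have hiB : i ∈ B := hcB ⟨hci, (mem_erase.1 hi).1⟩
      rw [map_smul, show v i = v (⟨i, hiB⟩ : B) from rfl,
        β.coord_apply_of_ne hβ fun h => hik (congrArg Subtype.val h), smul_zero]

structure IsCircuit (v : ι → E) (c : ι → 𝕜) : Prop where
  ne_zero : c ≠ 0
  sum_smul_eq_zero : ∑ i, c i • v i = 0
  eq_zero_of_support_ssubset :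
    ∀ m : ι → 𝕜, ∑ i, m i • v i = 0 → support m ⊂ support c → m = 0

theorem isCircuit_of_minimal {C : Finset ι} {c : ι → 𝕜} (hC : C.Nonempty)
    (hsupp : ∀ i, c i ≠ 0 ↔ i ∈ C) (hdep : ∑ i, c i • v i = 0)
    (hmin : ∀ m : ι → 𝕜, ∑ i, m i • v i = 0 → (∀ i, m i ≠ 0 → i ∈ C) →
      m = 0 ∨ ∀ i ∈ C, m i ≠ 0) :
    IsCircuit v c ∧ support c = C := by
  have hsC : support c = C := Set.ext hsupp
  refine ⟨⟨fun h => ?_, hdep, fun m hm hmc => ?_⟩, hsC⟩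
  · obtain ⟨i, hi⟩ := hC
    exact (hsupp i).2 hi (congrFun h i)
  · rw [hsC] at hmc
    exact (hmin m hm fun i hi => hmc.subset hi).resolve_right fun h =>
      hmc.not_subset fun i hi => h i hi

namespace IsCircuit

variable {c d : ι → 𝕜}

theorem eq_zero_of_support_subset (hc : IsCircuit v c) {m : ι → 𝕜}
    (hm : ∑ i, m i • v i = 0) (hmc : support m ⊆ support c) {j : ι} (hmj : m j = 0)
    (hcj : c j ≠ 0) : m = 0 :=
  hc.eq_zero_of_support_ssubset m hm
    (ssubset_of_subset_not_superset hmc fun h => h hcj hmj)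

theorem support_eq_of_subset (hc : IsCircuit v c) (hd : IsCircuit v d)
    (hdc : support d ⊆ support c) : support d = support c :=
  hdc.eq_of_not_ssubset fun h =>
    hd.ne_zero (hc.eq_zero_of_support_ssubset d hd.sum_smul_eq_zero h)

theorem neg (hc : IsCircuit v c) : IsCircuit v (-c) where
  ne_zero := neg_ne_zero.2 hc.ne_zero
  sum_smul_eq_zero := by simp [neg_smul, sum_neg_distrib, hc.sum_smul_eq_zero]
  eq_zero_of_support_ssubset m hm h :=
    hc.eq_zero_of_support_ssubset m hm (by rwa [Function.support_neg] at h)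

theorem linearIndepOn_support_diff (hc : IsCircuit v c) {b : ι} (hb : c b ≠ 0) :
    LinearIndepOn 𝕜 v (support c \ {b}) :=
  linearIndepOn_iff_sum_smul.2 fun _m hm hmc =>
    hc.eq_zero_of_support_subset hm (hmc.trans Set.sdiff_subset)
      (notMem_support.1 fun h => (hmc h).2 rfl) hb

theorem exists_basis (hc : IsCircuit v c) (hspan : Submodule.span 𝕜 (Set.range v) = ⊤)
    {b : ι} (hb : c b ≠ 0) :
    ∃ (B : Set ι) (β : Basis B 𝕜 E), (∀ k, β k = v k) ∧ support c \ {b} ⊆ B ∧ b ∉ B := by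
  have hI := hc.linearIndepOn_support_diff hb
  have hB := hI.linearIndepOn_extend (Set.subset_univ _)
  refine ⟨_, Basis.mk hB ?_, fun k => Basis.mk_apply .., hI.subset_extend _, fun hbB => ?_⟩
  · rw [← hspan, ← Set.image_univ, ← Set.image_eq_range]
    exact Submodule.span_le.2 (hI.image_subset_span_image_extend _)
  · refine hc.ne_zero (linearIndepOn_iff_sum_smul.1 hB c hc.sum_smul_eq_zero fun i hi => ?_)
    by_cases hib : i = b
    · exact hib ▸ hbB
    · exact hI.subset_extend _ ⟨hi, hib⟩

end IsCircuit

section Ordered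

variable [LinearOrder 𝕜]

def IsMixed (c : ι → 𝕜) : Prop := ∃ a b, 0 < c a ∧ c b < 0

variable (𝕜) in
def IsPure (v : ι → E) : Prop :=
  ∀ f : Module.Dual 𝕜 E, f ≠ 0 → 2 ≤ {i | 0 < f (v i)}.ncard ∨ 2 ≤ {i | f (v i) < 0}.ncard

theorem not_isMixed_iff {c : ι → 𝕜} : ¬IsMixed c ↔ 0 ≤ c ∨ c ≤ 0 := by
  simp only [IsMixed, not_exists, not_and, not_lt, Pi.le_def, Pi.zero_apply]
  refine ⟨fun h => ?_, ?_⟩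
  · by_cases hpos : ∃ a, 0 < c a
    · obtain ⟨a, ha⟩ := hpos
      exact .inl fun b => h a b ha
    · push Not at hpos
      exact .inr hpos
  · rintro (h | h) a b ha
    · exact h b
    · exact absurd (h a) (not_le.2 ha)

variable [IsStrictOrderedRing 𝕜]

/-- Subtracting from `z` the multiple of `c` that first kills a coordinate of `z` keeps every
coordinate of `z` on its side of `0`. -/
theorem exists_conformal_support_ssubset {z c : ι → 𝕜} (hz : ∑ i, z i • v i = 0)
    (hc : ∑ i, c i • v i = 0) (hc0 : c ≠ 0) (hcz : support c ⊂ support z) :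
    ∃ z' : ι → 𝕜, ∑ i, z' i • v i = 0 ∧ z' ≠ 0 ∧ support z' ⊂ support z ∧
      ∀ i, 0 ≤ z' i * z i := by
  obtain ⟨k, hk, hmin⟩ := exists_min_image {i | c i ≠ 0} (fun i => |z i / c i|)
    (by simpa [Finset.Nonempty, funext_iff] using hc0)
  obtain ⟨j, hjz, hjc⟩ := Set.exists_of_ssubset hcz
  have hck : c k ≠ 0 := by simpa using hk
  have hcz' : ∀ i, z i = 0 → c i = 0 := fun i hi =>
    notMem_support.1 fun h => hcz.subset h hi
  set t := z k / c k
  refine ⟨z - t • c, ?_, fun h => hjz ?_, ?_, fun i => ?_⟩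
  · simp [sub_smul, mul_smul, sum_sub_distrib, ← smul_sum, hz, hc]
  · simpa [notMem_support.1 hjc] using congrFun h j
  · refine (Set.ssubset_iff_of_subset fun i hi => ?_).2 ⟨k, fun h0 => hck (hcz' k h0), ?_⟩
    · exact fun h0 => hi (by simp [h0, hcz' i h0])
    · simp [t, hck]
  · by_cases hci : c i = 0
    · simpa [hci] using mul_self_nonneg (z i)
    set ρ := z i / c i
    have hρt : t * ρ ≤ ρ * ρ := calc
      t * ρ ≤ |t| * |ρ| := by rw [← abs_mul]; exact le_abs_self _
      _ ≤ |ρ| * |ρ| := mul_le_mul_of_nonneg_right (hmin i (by simpa using hci)) (abs_nonneg _)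
      _ = ρ * ρ := abs_mul_abs_self ρ
    have : (z - t • c) i * z i = c i ^ 2 * (ρ * ρ - t * ρ) := by
      simp only [ρ, Pi.sub_apply, Pi.smul_apply, smul_eq_mul]
      field_simp
    rw [this]
    exact mul_nonneg (sq_nonneg _) (sub_nonneg.2 hρt)

theorem exists_isCircuit_conformal {z : ι → 𝕜} (hz : ∑ i, z i • v i = 0) (hz0 : z ≠ 0) :
    ∃ μ, IsCircuit v μ ∧ ∀ i, μ i ≠ 0 → 0 < μ i * z i := by
  induction hn : (support z).ncard using Nat.strong_induction_on generalizing z with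
  | _ n ih =>
  by_cases hmin : ∀ m : ι → 𝕜, ∑ i, m i • v i = 0 → support m ⊂ support z → m = 0
  · exact ⟨z, ⟨hz0, hz, hmin⟩, fun i hi => mul_self_pos.2 hi⟩
  push Not at hmin
  obtain ⟨c, hc, hcz, hc0⟩ := hmin
  obtain ⟨z', hz', hz'0, hz'z, hsign⟩ := exists_conformal_support_ssubset hz hc hc0 hcz
  obtain ⟨μ, hμ, hμz'⟩ := ih _ (hn ▸ Set.ncard_lt_ncard hz'z) hz' hz'0 rfl
  refine ⟨μ, hμ, fun i hi => ?_⟩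
  have hz'i : z' i ≠ 0 := fun h => by simpa [h] using hμz' i hi
  have hzi : z i ≠ 0 := hz'z.subset hz'i
  have : 0 < μ i * z i * z' i ^ 2 := by
    have := mul_pos (hμz' i hi) ((hsign i).lt_of_ne' (mul_ne_zero hz'i hzi))
    linarith [show μ i * z' i * (z' i * z i) = μ i * z i * z' i ^ 2 by ring]
  exact pos_of_mul_pos_left this (sq_nonneg _)

namespace IsCircuit

variable {c d : ι → 𝕜}

theorem exists_nonneg_of_not_isMixed (hc : IsCircuit v c) (hmix : ¬IsMixed c) :
    ∃ c' : ι → 𝕜, IsCircuit v c' ∧ support c' = support c ∧ 0 ≤ c' := by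
  rcases not_isMixed_iff.1 hmix with h | h
  · exact ⟨c, hc, rfl, h⟩
  · exact ⟨-c, hc.neg, support_neg c, neg_nonneg.2 h⟩

theorem exists_isMixed_of_nonneg (hc : IsCircuit v c) (hd : IsCircuit v d) (hc0 : 0 ≤ c)
    (hd0 : 0 ≤ d) {i₀ : ι} (hci : c i₀ ≠ 0) (hdi : d i₀ ≠ 0) (hne : support c ≠ support d) :
    ∃ μ : ι → 𝕜, IsCircuit v μ ∧ IsMixed μ ∧ support μ ⊆ (support c ∪ support d) \ {i₀} := by
  set z : ι → 𝕜 := d i₀ • c - c i₀ • d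
  have hz : ∑ i, z i • v i = 0 := by
    simp [z, sub_smul, mul_smul, sum_sub_distrib, ← smul_sum, hc.sum_smul_eq_zero,
      hd.sum_smul_eq_zero]
  have hz0 : z ≠ 0 := by
    intro h
    refine hne (Set.ext fun i => ?_)
    have hi : d i₀ * c i = c i₀ * d i := by simpa [z, sub_eq_zero] using congrFun h i
    simp only [mem_support]
    constructor <;> intro h0 h1 <;> simp_all
  obtain ⟨μ, hμ, hμz⟩ := exists_isCircuit_conformal hz hz0
  have hμi₀ : μ i₀ = 0 := by
    by_contra h
    simpa [z, mul_comm] using hμz i₀ h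
  have hμz' : ∀ i, μ i ≠ 0 → z i ≠ 0 := fun i hi h => by simpa [h] using hμz i hi
  refine ⟨μ, hμ, ?_, fun i hi => ⟨?_, fun h => hi (h ▸ hμi₀)⟩⟩
  · by_contra hmix
    apply hμ.ne_zero
    rcases not_isMixed_iff.1 hmix with hpos | hneg
    · refine hc.eq_zero_of_support_subset hμ.sum_smul_eq_zero (fun i hi hci0 => ?_) hμi₀ hci
      have hzi : 0 < z i := pos_of_mul_pos_right (hμz i hi) (hpos i)
      simp only [z, hci0, Pi.sub_apply, Pi.smul_apply, smul_eq_mul, mul_zero, zero_sub] at hzi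
      nlinarith [mul_nonneg (hc0 i₀) (hd0 i)]
    · refine hd.eq_zero_of_support_subset hμ.sum_smul_eq_zero (fun i hi hdi0 => ?_) hμi₀ hdi
      have hzi : z i < 0 := neg_of_mul_pos_right (hμz i hi) (hneg i)
      simp only [z, hdi0, Pi.sub_apply, Pi.smul_apply, smul_eq_mul, mul_zero, sub_zero] at hzi
      nlinarith [mul_nonneg (hd0 i₀) (hc0 i)]
  · by_contra h
    simp only [Set.mem_union, mem_support, not_or, not_not] at h
    exact hμz' i hi (by simp [z, h.1, h.2])

theorem exists_isMixed_support_ssubset (hc : IsCircuit v c) (hd : IsCircuit v d)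
    (hne : support c ≠ support d) {i₀ : ι} (hci : c i₀ ≠ 0) (hdi : d i₀ ≠ 0) :
    ∃ μ : ι → 𝕜, IsCircuit v μ ∧ IsMixed μ ∧ support μ ⊂ support c ∪ support d := by
  by_cases hcm : IsMixed c
  · refine ⟨c, hc, hcm, Set.subset_union_left.ssubset_of_not_superset fun h => hne ?_⟩
    exact (hc.support_eq_of_subset hd (Set.subset_union_right.trans h)).symm
  by_cases hdm : IsMixed d
  · refine ⟨d, hd, hdm, Set.subset_union_right.ssubset_of_not_superset fun h => hne ?_⟩
    exact hd.support_eq_of_subset hc (Set.subset_union_left.trans h)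
  obtain ⟨c', hc', hcc', hc'0⟩ := hc.exists_nonneg_of_not_isMixed hcm
  obtain ⟨d', hd', hdd', hd'0⟩ := hd.exists_nonneg_of_not_isMixed hdm
  obtain ⟨μ, hμ, hmix, hsub⟩ := hc'.exists_isMixed_of_nonneg hd' hc'0 hd'0
    (mem_support.1 (hcc' ▸ mem_support.2 hci)) (mem_support.1 (hdd' ▸ mem_support.2 hdi))
    (by rwa [hcc', hdd'])
  refine ⟨μ, hμ, hmix, hsub.trans_ssubset ?_⟩
  rw [hcc', hdd']
  exact Set.sdiff_singleton_ssubset.2 (.inl hci)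

end IsCircuit

theorem exists_forall_pos_add_mul (x y : ι → 𝕜) :
    ∃ ε : 𝕜, ∀ i, 0 < x i ∨ x i = 0 ∧ 0 < y i → 0 < x i + ε * y i := by
  classical
  set ε := (insert 1 (({i | 0 < x i} : Finset ι).image fun i => x i / (|y i| + 1))).min'
    (insert_nonempty _ _)
  have hε : 0 < ε := by
    simp only [ε, lt_min'_iff, mem_insert, mem_image, mem_filter, mem_univ, true_and]
    rintro _ (rfl | ⟨i, hi, rfl⟩)
    exacts [one_pos, by positivity]
  refine ⟨ε, fun i => ?_⟩
  rintro (hx | ⟨hx, hy⟩)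
  · have : ε * (|y i| + 1) ≤ x i := (le_div_iff₀ (by positivity)).1 <|
      min'_le _ _ (mem_insert_of_mem (mem_image_of_mem _ (by simpa using hx)))
    nlinarith [neg_abs_le (y i)]
  · rw [hx, zero_add]
    exact mul_pos hε hy

theorem Module.Basis.exists_pos_insert {B : Set ι} (β : Basis B 𝕜 E) (hβ : ∀ k, β k = v k)
    {a : B} {b : ι} (hab : 0 < β.coord a (v b)) :
    ∃ f : Module.Dual 𝕜 E, ∀ i ∈ insert b B, 0 < f (v i) := by
  classical
  obtain ⟨ε, hε⟩ := exists_forall_pos_add_mul (fun i => β.coord a (v i))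
    (fun i => (∑ k, β.coord k) (v i))
  refine ⟨β.coord a + ε • ∑ k, β.coord k, fun i hi => ?_⟩
  have := hε i ?_
  · simpa only [LinearMap.add_apply, LinearMap.smul_apply, smul_eq_mul] using this
  rcases hi with rfl | hiB
  · exact .inl hab
  lift i to B using hiB
  by_cases hia : i = a
  · exact .inl (by rw [hia, β.coord_apply_self hβ]; exact one_pos)
  refine .inr ⟨β.coord_apply_of_ne hβ hia, ?_⟩
  rw [LinearMap.sum_apply, sum_eq_single i (fun k _ hki => β.coord_apply_of_ne hβ hki.symm)
    (by simp), β.coord_apply_self hβ]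
  exact one_pos

theorem IsCircuit.exists_dual_of_isMixed {c : ι → 𝕜} (hc : IsCircuit v c) (hmix : IsMixed c)
    (hspan : Submodule.span 𝕜 (Set.range v) = ⊤)
    (hcard : (support c).ncard ≤ Module.finrank 𝕜 E) :
    ∃ (Z : Set ι) (f₀ f₁ : Module.Dual 𝕜 E), Z.ncard = Module.finrank 𝕜 E ∧ f₀ ≠ 0 ∧
      ∀ i ∈ Z, f₀ (v i) = 0 ∧ 0 < f₁ (v i) := by
  obtain ⟨a, b, ha, hb⟩ := hmix
  obtain ⟨B, β, hβ, hcB, hbB⟩ := hc.exists_basis hspan hb.ne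
  have haB : a ∈ B := hcB ⟨ha.ne', fun h => (ha.trans (h ▸ hb)).false⟩
  have hB : B.ncard = Module.finrank 𝕜 E := by
    rw [Module.finrank_eq_nat_card_basis β, Nat.card_coe_set_eq]
  obtain ⟨j, hjB, hcj⟩ : ∃ j ∈ B, c j = 0 := by
    by_contra! h
    have := Set.ncard_le_ncard (show B ⊆ support c \ {b} from
      fun i hi => ⟨h i hi, fun hib => hbB (hib ▸ hi)⟩)
    rw [Set.ncard_sdiff_singleton_of_mem (mem_support.2 hb.ne)] at this
    have : 0 < (support c).ncard := (Set.ncard_pos (Set.toFinite _)).2 ⟨b, hb.ne⟩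
    omega
  have hvb := β.coord_apply_of_sum_smul_eq_zero hβ hc.sum_smul_eq_zero hb.ne hcB hbB
  obtain ⟨f₁, hf₁⟩ := β.exists_pos_insert hβ (a := ⟨a, haB⟩)
    (by rw [hvb]; exact div_pos_of_neg_of_neg (neg_neg_of_pos ha) hb)
  refine ⟨insert b (B \ {j}), β.coord ⟨j, hjB⟩, f₁, ?_, fun h => ?_, fun i hi =>
    ⟨?_, hf₁ i (Set.insert_subset_insert Set.sdiff_subset hi)⟩⟩
  · rw [Set.ncard_insert_of_notMem (fun h => hbB h.1), Set.ncard_sdiff_singleton_of_mem hjB, hB]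
    have := (Set.ncard_pos (Set.toFinite _)).2 ⟨j, hjB⟩
    omega
  · exact one_ne_zero (by rw [← β.coord_apply_self hβ ⟨j, hjB⟩, h, LinearMap.zero_apply])
  · rcases hi with rfl | ⟨hiB, hij⟩
    · simp [hvb, hcj]
    · exact β.coord_apply_of_ne hβ (j := ⟨i, hiB⟩) fun h => hij (congrArg Subtype.val h)

theorem IsPure.exists_ncard_add_two_le (hpure : IsPure 𝕜 v) {Z : Set ι}
    {f₀ f₁ : Module.Dual 𝕜 E} (hf₀ : f₀ ≠ 0) (hZ : ∀ i ∈ Z, f₀ (v i) = 0 ∧ 0 < f₁ (v i)) :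
    ∃ f : Module.Dual 𝕜 E, Z.ncard + 2 ≤ {i | 0 < f (v i)}.ncard := by
  obtain ⟨u, hu, hZu⟩ : ∃ u : Module.Dual 𝕜 E,
      2 ≤ {i | 0 < u (v i)}.ncard ∧ ∀ i ∈ Z, u (v i) = 0 := by
    rcases hpure f₀ hf₀ with h | h
    · exact ⟨f₀, h, fun i hi => (hZ i hi).1⟩
    · exact ⟨-f₀, by simpa using h, fun i hi => by simp [(hZ i hi).1]⟩
  obtain ⟨ε, hε⟩ := exists_forall_pos_add_mul (fun i => u (v i)) (fun i => f₁ (v i))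
  have hdisj : Disjoint Z {i | 0 < u (v i)} :=
    Set.disjoint_left.2 fun i hi h => h.ne' (hZu i hi)
  refine ⟨u + ε • f₁, ?_⟩
  calc Z.ncard + 2 ≤ (Z ∪ {i | 0 < u (v i)}).ncard := by rw [Set.ncard_union_eq hdisj]; omega
    _ ≤ _ := Set.ncard_le_ncard fun i hi => by
      simpa using hε i (hi.elim (fun h => .inr ⟨hZu i h, (hZ i h).2⟩) .inl)

theorem IsPure.exists_finrank_add_two_le (hpure : IsPure 𝕜 v)
    (hspan : Submodule.span 𝕜 (Set.range v) = ⊤) {c : ι → 𝕜} (hc : IsCircuit v c)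
    (hmix : IsMixed c) (hcard : (support c).ncard ≤ Module.finrank 𝕜 E) :
    ∃ f : Module.Dual 𝕜 E, Module.finrank 𝕜 E + 2 ≤ {i | 0 < f (v i)}.ncard := by
  obtain ⟨Z, f₀, f₁, hZ, hf₀, hZf⟩ := hc.exists_dual_of_isMixed hmix hspan hcard
  exact hZ ▸ hpure.exists_ncard_add_two_le hf₀ hZf

end Ordered

end

theorem stmt_17_general (r n : ℕ) (V : Fin n → (Fin r → ℝ))
    (hspan : Submodule.span ℝ (Set.range V) = ⊤)
    (hpure : ∀ w : Fin r → ℝ, w ≠ 0 →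
      2 ≤ (Finset.univ.filter (fun i => 0 < ∑ k, w k * V i k)).card ∨
      2 ≤ (Finset.univ.filter (fun i => ∑ k, w k * V i k < 0)).card)
    (hdeg1 : ∀ w : Fin r → ℝ,
      (Finset.univ.filter (fun i => 0 < ∑ k, w k * V i k)).card ≤ r + 1)
    (C : Finset (Fin n)) (lC : Fin n → ℝ) (hC : C.Nonempty)
    (hsuppC : ∀ i, lC i ≠ 0 ↔ i ∈ C)
    (hdepC : ∑ i, lC i • V i = 0)
    (hminC : ∀ m : Fin n → ℝ, (∑ i, m i • V i = 0) → (∀ i, m i ≠ 0 → i ∈ C) →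
      (m = 0 ∨ ∀ i ∈ C, m i ≠ 0))
    (D : Finset (Fin n)) (lD : Fin n → ℝ) (hD : D.Nonempty)
    (hsuppD : ∀ i, lD i ≠ 0 ↔ i ∈ D)
    (hdepD : ∑ i, lD i • V i = 0)
    (hminD : ∀ m : Fin n → ℝ, (∑ i, m i • V i = 0) → (∀ i, m i ≠ 0 → i ∈ D) →
      (m = 0 ∨ ∀ i ∈ D, m i ≠ 0))
    (hne : C ≠ D) (hcard : (C ∪ D).card ≤ r + 1) :
    Disjoint C D := by
  obtain ⟨hc, hsC⟩ := isCircuit_of_minimal hC hsuppC hdepC hminC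
  obtain ⟨hd, hsD⟩ := isCircuit_of_minimal hD hsuppD hdepD hminD
  by_contra hCD
  obtain ⟨i₀, hi₀C, hi₀D⟩ := Finset.not_disjoint_iff.1 hCD
  obtain ⟨μ, hμ, hmix, hμCD⟩ := hc.exists_isMixed_support_ssubset hd
    (by rwa [hsC, hsD, Ne, Finset.coe_inj]) ((hsuppC i₀).2 hi₀C) ((hsuppD i₀).2 hi₀D)
  have hμcard : (support μ).ncard ≤ Module.finrank ℝ (Fin r → ℝ) := by
    have := Set.ncard_lt_ncard hμCD
    rw [hsC, hsD, ← Finset.coe_union, Set.ncard_coe_finset] at this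
    rw [Module.finrank_fin_fun]
    omega
  have hVpure : IsPure ℝ V := fun f hf => by
    obtain ⟨w, hw⟩ := f.exists_eq_sum_mul
    simp_rw [hw, ncard_setOf_eq_card_filter]
    refine hpure w fun hw0 => hf (LinearMap.ext fun x => ?_)
    simp [hw, hw0]
  obtain ⟨f, hf⟩ := hVpure.exists_finrank_add_two_le hspan hμ hmix hμcard
  obtain ⟨w, hw⟩ := f.exists_eq_sum_mul
  simp_rw [hw, ncard_setOf_eq_card_filter, Module.finrank_fin_fun] at hf
  have := hdeg1 w
  omega

/-- Let `V` be a pure vector configuration spanning `ℝ^r` with dual degree `1`. If `C` and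
`D` are distinct circuits of `V` (supports of inclusion-minimal nonzero linear dependences)
with `|C ∪ D| ≤ r + 1`, then `C` and `D` are disjoint. -/
theorem stmt_17 (r n : ℕ) (V : Fin n → (Fin r → ℝ))
    (hspan : Submodule.span ℝ (Set.range V) = ⊤)
    (hpure : ∀ w : Fin r → ℝ, w ≠ 0 →
      2 ≤ (Finset.univ.filter (fun i => 0 < ∑ k, w k * V i k)).card ∨
      2 ≤ (Finset.univ.filter (fun i => ∑ k, w k * V i k < 0)).card)
    (hdeg1 : ∀ w : Fin r → ℝ,
      (Finset.univ.filter (fun i => 0 < ∑ k, w k * V i k)).card ≤ r + 1)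
    (hdeg2 : ∃ w : Fin r → ℝ, w ≠ 0 ∧
      (Finset.univ.filter (fun i => 0 < ∑ k, w k * V i k)).card = r + 1)
    (C : Finset (Fin n)) (lC : Fin n → ℝ) (hC : C.Nonempty)
    (hsuppC : ∀ i, lC i ≠ 0 ↔ i ∈ C)
    (hdepC : ∑ i, lC i • V i = 0)
    (hminC : ∀ m : Fin n → ℝ, (∑ i, m i • V i = 0) → (∀ i, m i ≠ 0 → i ∈ C) →
      (m = 0 ∨ ∀ i ∈ C, m i ≠ 0))
    (D : Finset (Fin n)) (lD : Fin n → ℝ) (hD : D.Nonempty)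
    (hsuppD : ∀ i, lD i ≠ 0 ↔ i ∈ D)
    (hdepD : ∑ i, lD i • V i = 0)
    (hminD : ∀ m : Fin n → ℝ, (∑ i, m i • V i = 0) → (∀ i, m i ≠ 0 → i ∈ D) →
      (m = 0 ∨ ∀ i ∈ D, m i ≠ 0))
    (hne : C ≠ D) (hcard : (C ∪ D).card ≤ r + 1) :
    Disjoint C D :=
  stmt_17_general r n V hspan hpure hdeg1 C lC hC hsuppC hdepC hminC D lD hD hsuppD hdepD hminD hne
    hcard
end
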